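/- arXiv:2509.21915 — 5 statements merged into one kernel-verified Lean document; each statement's English description precedes it below -/
import Mathlib

section
/- Every point u in the interior of the Tits cone intersection Cone(J)° is contained in an open ball (in Θ_J) that intersects only finitely many of the hyperplanes H_α with α a positive J-root. In particular, the hyperplane arrangement (Cone(J)°, 𝓗_J) is locally finite. -/
open CoxeterSystem

/-- `v` is a nonnegative linear combination of the vectors `α b`. -/
def InNonnegSpan {B V : Type*} [AddCommGroup V] [Module ℝ V] (α : B → V) (v : V) : Prop :=
  ∃ c : B →₀ ℝ, (∀ b, 0 ≤ c b) ∧ v = c.sum fun b r => r • α b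

/-- The reflection representation of a Coxeter system, axiomatised: a representation `ρ` of `W`
on a real vector space `V` with linearly independent simple roots `α i` spanning `V`, such that
each simple reflection negates its simple root, every root `w · α i` is positive or negative,
and positivity of `w · α i` is detected by the length function. -/
structure ReflRep {B W : Type*} [Group W] {M : CoxeterMatrix B} (cs : CoxeterSystem M W)
    (V : Type*) [AddCommGroup V] [Module ℝ V] where
  ρ : Representation ℝ W V
  α : B → V
  indep : LinearIndependent ℝ α
  spans : Submodule.span ℝ (Set.range α) = ⊤
  refl_simple : ∀ i : B, ρ (cs.simple i) (α i) = -α i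
  root_pos_or_neg : ∀ (w : W) (i : B),
    InNonnegSpan α (ρ w (α i)) ∨ InNonnegSpan α (-(ρ w (α i)))
  pos_iff_length : ∀ (w : W) (i : B),
    InNonnegSpan α (ρ w (α i)) ↔ cs.length (w * cs.simple i) = cs.length w + 1

/-- The standard parabolic subgroup `W_J`. -/
def parabolic {B W : Type*} [Group W] {M : CoxeterMatrix B} (cs : CoxeterSystem M W)
    (J : Set B) : Subgroup W :=
  Subgroup.closure (cs.simple '' J)

open RealInnerProductSpace

variable {B W : Type*} [Group W] [Fintype B] {M : CoxeterMatrix B} {cs : CoxeterSystem M W}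

/-- We realise the contragredient representation `Θ = V*` as the Euclidean space `V` itself via the
inner product pairing `φ(α) := ⟪φ, α⟫`; the contragredient action is then `g • φ = (ρ g⁻¹)* φ`. -/
noncomputable def contra (r : ReflRep cs (EuclideanSpace ℝ B)) (g : W) :
    EuclideanSpace ℝ B →ₗ[ℝ] EuclideanSpace ℝ B :=
  LinearMap.adjoint (r.ρ g⁻¹)

/-- `Θ_J = {φ : φ(α_j) = 0 ∀ j ∈ J}`. -/
def ThetaJ (r : ReflRep cs (EuclideanSpace ℝ B)) (J : Set B) : Set (EuclideanSpace ℝ B) :=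
  {φ | ∀ j ∈ J, ⟪φ, r.α j⟫ = 0}

/-- The closed fundamental chamber. -/
def closedChamber (r : ReflRep cs (EuclideanSpace ℝ B)) : Set (EuclideanSpace ℝ B) :=
  {φ | ∀ i : B, 0 ≤ ⟪φ, r.α i⟫}

/-- The Tits cone. -/
noncomputable def titsCone (r : ReflRep cs (EuclideanSpace ℝ B)) : Set (EuclideanSpace ℝ B) :=
  ⋃ w : W, contra r w '' closedChamber r

/-- The Tits cone intersection `Cone(J) = Cone ∩ Θ_J`. -/
noncomputable def coneJ (r : ReflRep cs (EuclideanSpace ℝ B)) (J : Set B) :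
    Set (EuclideanSpace ℝ B) :=
  titsCone r ∩ ThetaJ r J

/-- The reflection hyperplane `H_α`. -/
def hyperplaneOf (u : EuclideanSpace ℝ B) : Set (EuclideanSpace ℝ B) := {φ | ⟪φ, u⟫ = 0}

/-- A positive root. -/
def IsPosRoot (r : ReflRep cs (EuclideanSpace ℝ B)) (u : EuclideanSpace ℝ B) : Prop :=
  (∃ (w : W) (i : B), u = r.ρ w (r.α i)) ∧ InNonnegSpan r.α u

/-- The hyperplane arrangement `𝓗_J = {H_α ∩ Θ_J : α ∈ Φ_J⁺}`, where `Φ_J⁺` consists of positive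
roots `α` with `Θ_J ⊄ H_α`. -/
def arrangementJ (r : ReflRep cs (EuclideanSpace ℝ B)) (J : Set B) :
    Set (Set (EuclideanSpace ℝ B)) :=
  {S | ∃ u, IsPosRoot r u ∧ ¬ ThetaJ r J ⊆ hyperplaneOf u ∧ S = hyperplaneOf u ∩ ThetaJ r J}

/-
If a hyperplane `H_α ∩ Θ_J` passes within `ε` of `u`, it separates `u` from one of the finitely
many test points `u ± (δ/2) e_d` (`e_d` an orthonormal basis of `Θ_J`), which lie in the Tits cone.
So some test point `p = w · φ₀`, with `φ₀` in the closed chamber, pairs negatively with `α`, and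
then `w⁻¹ α` is a negative root: `α` is an inversion root of `w⁻¹`. Inversion roots of a fixed
element lie on finitely many rays (induct along a word, using that `s_i` sends a positive root to
a negative one only if it is a positive multiple of `α_i`), and a ray determines its hyperplane.
The fact about `s_i` needs the simple reflections to be pairwise distinct, which we read off from
the geometric representation; its braid relations come from Mathlib's Chebyshev formula for powers
of a product of two reflections.
-/

open Real

namespace Module

variable {M : Type*} [AddCommGroup M] [Module ℝ M] {x y : M} {f g : Dual ℝ M}

open Polynomial.Chebyshev in
lemma reflection_mul_reflection_pow_eq_one (hf : f x = 2) (hg : g y = 2) {m : ℕ} (hm : 3 ≤ m)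
    (h : f y * g x = 4 * cos (π / m) ^ 2) : (reflection hf * reflection hg) ^ m = 1 := by
  set φ := 2 * π / m with hφ
  have hmR : (3 : ℝ) ≤ m := by exact_mod_cast hm
  have hsin : sin φ ≠ 0 := (sin_pos_of_pos_of_lt_pi (by positivity) (by
    rw [hφ, div_lt_iff₀ (by positivity)]; nlinarith [pi_pos])).ne'
  have hmφ : (m : ℝ) * φ = 2 * π := by rw [hφ]; field_simp
  have ht : 2 * cos φ = f y * g x - 2 := by
    rw [h, hφ, mul_div_assoc, cos_two_mul]; ring
  set S' : ℤ → ℝ := fun k ↦ (S ℝ k).eval (2 * cos φ) with hS'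
  have hS (k : ℤ) : S' k = sin ((k + 1) * φ) / sin φ := by
    rw [hS', ← S_two_mul_real_cos, mul_div_cancel_right₀ _ hsin]
  suffices hA : S' ((m - 2) / 2) * (S' ((m - 1) / 2) + S' ((m - 3) / 2)) = 0 ∧
      S' ((m - 1) / 2) * (S' (m / 2) + S' ((m - 2) / 2)) = 0 by
    ext z
    rw [reflection_mul_reflection_pow_apply hf hg m z _ ht]
    simp only [hS'] at hA
    simp [hA.1, hA.2]
  obtain ⟨k, rfl | rfl⟩ := Nat.even_or_odd' m
  · have hk : S' (k - 1) = 0 := by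
      rw [hS]
      push_cast at hmφ ⊢
      rw [show ((k : ℝ) - 1 + 1) * φ = π by linarith, sin_pi, zero_div]
    rw [show ((2 * k : ℕ) - 2 : ℤ) / 2 = k - 1 by omega,
      show ((2 * k : ℕ) - 1 : ℤ) / 2 = k - 1 by omega]
    simp [hk]
  · have hk : S' k + S' (k - 1) = 0 := by
      rw [hS, hS, ← add_div]
      push_cast at hmφ ⊢
      rw [show ((k : ℝ) + 1) * φ = 2 * π - (k - 1 + 1) * φ by linarith, sin_two_pi_sub,
        neg_add_cancel, zero_div]
    rw [show ((2 * k + 1 : ℕ) - 2 : ℤ) / 2 = k - 1 by omega,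
      show ((2 * k + 1 : ℕ) - 1 : ℤ) / 2 = k by omega,
      show ((2 * k + 1 : ℕ) - 3 : ℤ) / 2 = k - 1 by omega,
      show ((2 * k + 1 : ℕ) : ℤ) / 2 = k by omega]
    simp [hk]

lemma reflection_mul_self (hf : f x = 2) : reflection hf * reflection hf = 1 := by
  ext z; exact involutive_reflection hf z

lemma reflection_mul_reflection_sq_eq_one (hf : f x = 2) (hg : g y = 2) (hfy : f y = 0)
    (hgx : g x = 0) : (reflection hf * reflection hg) ^ 2 = 1 := by
  have hcomm : Commute (reflection hf) (reflection hg) := by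
    ext z
    simp only [LinearEquiv.mul_apply, reflection_apply, map_sub, map_smul, hfy, hgx]
    module
  rw [hcomm.mul_pow, sq, sq, reflection_mul_self, reflection_mul_self, one_mul]

end Module

namespace CoxeterMatrix

variable {B : Type*} [Fintype B] [DecidableEq B] (M : CoxeterMatrix B)

/-- For `M a b = 0` (i.e. `m = ∞`) Lean's `π / 0 = 0` gives `-cos 0 = -1`, the usual value. -/
noncomputable def cosForm (a b : B) : ℝ := -cos (π / M a b)

noncomputable def geomCoroot (a : B) : Module.Dual ℝ (B → ℝ) :=
  ∑ b, (2 * M.cosForm a b) • LinearMap.proj b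

lemma geomCoroot_single (a b : B) : M.geomCoroot a (Pi.single b 1) = 2 * M.cosForm a b := by
  simp [geomCoroot, Pi.single_apply]

lemma geomCoroot_single_self (a : B) : M.geomCoroot a (Pi.single a 1) = 2 := by
  simp [geomCoroot_single, cosForm]

noncomputable def geomRefl (a : B) : (B → ℝ) ≃ₗ[ℝ] (B → ℝ) :=
  Module.reflection (M.geomCoroot_single_self a)

lemma isLiftable_geomRefl : M.IsLiftable M.geomRefl := by
  intro a b
  rcases eq_or_ne a b with rfl | hab
  · rw [M.diagonal, pow_one, geomRefl, Module.reflection_mul_self]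
  have hsymm : M.geomCoroot a (Pi.single b 1) * M.geomCoroot b (Pi.single a 1) =
      4 * cos (π / M a b) ^ 2 := by
    rw [geomCoroot_single, geomCoroot_single, cosForm, cosForm, M.symmetric]; ring
  have hm := M.off_diagonal a b hab
  obtain h | h | h : M a b = 0 ∨ M a b = 2 ∨ 3 ≤ M a b := by omega
  · rw [h, pow_zero]
  · rw [h]
    refine Module.reflection_mul_reflection_sq_eq_one _ _ ?_ ?_ <;>
      simp [geomCoroot_single, cosForm, M.symmetric b a, h]
  · exact Module.reflection_mul_reflection_pow_eq_one _ _ h hsymm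

end CoxeterMatrix

section ReflectionRepresentation

variable {B W V : Type*} [Group W] {M : CoxeterMatrix B} {cs : CoxeterSystem M W}
  [AddCommGroup V] [Module ℝ V]

lemma CoxeterSystem.simple_injective [Finite B] : Function.Injective cs.simple := by
  classical
  have := Fintype.ofFinite B
  intro i j hij
  by_contra hne
  have := congrArg (fun w ↦ cs.lift ⟨M.geomRefl, M.isLiftable_geomRefl⟩ w (Pi.single i 1) i) hij
  norm_num [CoxeterMatrix.geomRefl, Module.reflection_apply, hne] at this

lemma CoxeterSystem.length_simple_mul_simple [Finite B] {i j : B} (hij : i ≠ j) :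
    cs.length (cs.simple i * cs.simple j) = 2 := by
  rcases cs.length_simple_mul (cs.simple j) i with h | h
  · rw [h, cs.length_simple]
  · rw [cs.length_simple, Nat.add_eq_right, cs.length_eq_zero_iff, mul_eq_one_iff_eq_inv,
      cs.inv_simple] at h
    exact absurd (cs.simple_injective h) hij

lemma InNonnegSpan.nonneg_apply {α : B → V} {v : V} (hv : InNonnegSpan α v) {ℓ : V →ₗ[ℝ] ℝ}
    (hℓ : ∀ b, 0 ≤ ℓ (α b)) : 0 ≤ ℓ v := by
  obtain ⟨c, hc, rfl⟩ := hv
  rw [map_finsuppSum]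
  exact Finsupp.sum_nonneg fun b _ ↦ by rw [map_smul, smul_eq_mul]; exact mul_nonneg (hc b) (hℓ b)

namespace ReflRep

variable (r : ReflRep cs V)

noncomputable def basis : Module.Basis B ℝ V := Module.Basis.mk r.indep r.spans.ge

lemma coe_basis : ⇑r.basis = r.α := Module.Basis.coe_mk _ _

lemma basis_repr_nonneg {v : V} (hv : InNonnegSpan r.α v) (b : B) : 0 ≤ r.basis.repr v b :=
  hv.nonneg_apply (ℓ := r.basis.coord b) fun b' ↦ by
    rw [← r.coe_basis, Module.Basis.coord_apply, Module.Basis.repr_self]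
    exact Finsupp.single_nonneg.2 zero_le_one b

lemma root_ne_zero (w : W) (i : B) : r.ρ w (r.α i) ≠ 0 :=
  (map_ne_zero_iff _ (r.ρ.apply_bijective w).injective).2 (r.indep.ne_zero i)

lemma simple_apply_simpleRoot_nonneg [Finite B] {i j : B} (hij : i ≠ j) :
    InNonnegSpan r.α (r.ρ (cs.simple i) (r.α j)) :=
  (r.pos_iff_length _ _).2 (by rw [cs.length_simple_mul_simple hij, cs.length_simple])

lemma exists_pos_smul_simpleRoot_of_not_nonneg [Finite B] {v : W} {i j : B}
    (hpos : InNonnegSpan r.α (r.ρ v (r.α j)))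
    (hneg : ¬ InNonnegSpan r.α (r.ρ (cs.simple i * v) (r.α j))) :
    ∃ c : ℝ, 0 < c ∧ r.ρ v (r.α j) = c • r.α i := by
  set γ := r.ρ v (r.α j)
  set δ := r.ρ (cs.simple i * v) (r.α j)
  have hδγ : δ = r.ρ (cs.simple i) γ := by simp only [δ, γ, map_mul, Module.End.mul_apply]
  have hγδ : γ = r.ρ (cs.simple i) δ := by
    rw [hδγ, ← Module.End.mul_apply, ← map_mul, cs.simple_mul_simple_self, map_one,
      Module.End.one_apply]
  have hδneg : InNonnegSpan r.α (-δ) := (r.root_pos_or_neg _ j).resolve_left hneg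
  -- Off `i`, the coordinates of `δ = s_i γ` are `≤ 0` as `δ` is negative, and `≥ 0` as `s_i` sends
  -- every other simple root to a positive root.
  have hcoord : ∀ b ≠ i, r.basis.repr δ b = 0 := by
    intro b hb
    refine le_antisymm (by simpa using r.basis_repr_nonneg hδneg b) ?_
    rw [hδγ]
    refine hpos.nonneg_apply (ℓ := r.basis.coord b ∘ₗ r.ρ (cs.simple i)) fun b' ↦ ?_
    rcases eq_or_ne b' i with rfl | hb'
    · rw [LinearMap.comp_apply, r.refl_simple]
      simp [← r.coe_basis, hb]
    · exact r.basis_repr_nonneg (r.simple_apply_simpleRoot_nonneg hb'.symm) b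
  have hδi : δ = r.basis.repr δ i • r.α i := by
    apply r.basis.repr.injective
    ext b
    rcases eq_or_ne b i with rfl | hb
    · simp [← r.coe_basis]
    · simp [← r.coe_basis, hcoord b hb, hb.symm]
  set c := r.basis.repr δ i
  have hc : c ≠ 0 := fun h ↦
    r.root_ne_zero (cs.simple i * v) j (show δ = 0 by rw [hδi, h, zero_smul])
  have hc' : 0 ≤ -c := by simpa using r.basis_repr_nonneg hδneg i
  refine ⟨-c, lt_of_le_of_ne hc' (neg_ne_zero.2 hc).symm, ?_⟩
  rw [hγδ, hδi, map_smul, r.refl_simple, smul_neg, neg_smul]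

lemma exists_finset_rays_of_inversion [Finite B] (w : W) :
    ∃ F : Finset V, ∀ (v : W) (j : B), InNonnegSpan r.α (r.ρ v (r.α j)) →
      ¬ InNonnegSpan r.α (r.ρ (w * v) (r.α j)) →
      ∃ β ∈ F, ∃ c : ℝ, 0 < c ∧ r.ρ v (r.α j) = c • β := by
  classical
  induction w using cs.simple_induction_left with
  | one => exact ⟨∅, fun v j hpos hneg ↦ (hneg (by rwa [one_mul])).elim⟩
  | mul_simple_left w i ih =>
    obtain ⟨F, hF⟩ := ih
    refine ⟨insert (r.ρ w⁻¹ (r.α i)) F, fun v j hpos hneg ↦ ?_⟩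
    by_cases hwv : InNonnegSpan r.α (r.ρ (w * v) (r.α j))
    · rw [mul_assoc] at hneg
      obtain ⟨c, hc, hcα⟩ := r.exists_pos_smul_simpleRoot_of_not_nonneg hwv hneg
      refine ⟨_, Finset.mem_insert_self _ _, c, hc, ?_⟩
      rw [← map_smul, ← hcα, map_mul, Module.End.mul_apply, Representation.inv_self_apply]
    · obtain ⟨β, hβ, c, hc, hcβ⟩ := hF v j hpos hwv
      exact ⟨β, Finset.mem_insert_of_mem hβ, c, hc, hcβ⟩

end ReflRep

end ReflectionRepresentation

lemma hyperplaneOf_smul {c : ℝ} (hc : c ≠ 0) (β : EuclideanSpace ℝ B) :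
    hyperplaneOf (c • β) = hyperplaneOf β := by
  ext φ
  simp [hyperplaneOf, real_inner_smul_right, hc]

lemma ReflRep.finite_hyperplaneOf_of_mem_titsCone (r : ReflRep cs (EuclideanSpace ℝ B))
    {φ : EuclideanSpace ℝ B} (hφ : φ ∈ titsCone r) :
    (hyperplaneOf '' {α | IsPosRoot r α ∧ ⟪φ, α⟫ < 0}).Finite := by
  obtain ⟨x, φ₀, hφ₀, rfl⟩ := Set.mem_iUnion.1 hφ
  obtain ⟨F, hF⟩ := r.exists_finset_rays_of_inversion x⁻¹
  refine (F.finite_toSet.image hyperplaneOf).subset ?_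
  rintro _ ⟨_, ⟨⟨⟨v, j, rfl⟩, hpos⟩, hneg⟩, rfl⟩
  rw [contra, LinearMap.adjoint_inner_left] at hneg
  have hinv : ¬ InNonnegSpan r.α (r.ρ (x⁻¹ * v) (r.α j)) := fun h ↦ by
    rw [map_mul, Module.End.mul_apply] at h
    exact hneg.not_ge (h.nonneg_apply (ℓ := innerₛₗ ℝ φ₀) hφ₀)
  obtain ⟨β, hβ, c, hc, hcβ⟩ := hF v j hpos hinv
  exact ⟨β, hβ, by rw [hcβ, hyperplaneOf_smul hc.ne']⟩

def thetaJSubmodule (r : ReflRep cs (EuclideanSpace ℝ B)) (J : Set B) :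
    Submodule ℝ (EuclideanSpace ℝ B) where
  carrier := ThetaJ r J
  add_mem' hx hy j hj := by rw [inner_add_left, hx j hj, hy j hj, add_zero]
  zero_mem' j _ := inner_zero_left _
  smul_mem' c x hx j hj := by rw [real_inner_smul_left, hx j hj, mul_zero]

section TestPoints

open Finset

variable {F : Type*} [NormedAddCommGroup F] [InnerProductSpace ℝ F] [FiniteDimensional ℝ F]

lemma exists_finset_exists_neg_of_ne_zero (u : F) {δ : ℝ} (hδ : 0 < δ) :
    ∃ ε > 0, ∃ P : Finset F, (∀ p ∈ P, dist p u < δ) ∧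
      ∀ ℓ : F →ₗ[ℝ] ℝ, ℓ ≠ 0 → ∀ ψ, dist ψ u < ε → ℓ ψ ≤ 0 → ∃ p ∈ P, ℓ p < 0 := by
  classical
  set e := stdOrthonormalBasis ℝ F
  set n := Module.finrank ℝ F
  refine ⟨δ / (2 * (n + 1)), by positivity, univ.image (fun d ↦ u + (δ / 2) • e d) ∪
    univ.image (fun d ↦ u - (δ / 2) • e d), ?_, ?_⟩
  · simp only [mem_union, mem_image, mem_univ, true_and]
    rintro _ (⟨d, rfl⟩ | ⟨d, rfl⟩) <;>
      simp [dist_eq_norm, norm_smul, abs_of_pos hδ, e.orthonormal.1 d] <;> linarith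
  intro ℓ hℓ ψ hψ hℓψ
  -- If `ℓ ≥ 0` at every test point, then `|ℓ (e d)| ≤ (2 / δ) ℓ u` for all `d`; since `ψ` is this
  -- close to `u`, `ℓ ψ ≤ 0` then forces `ℓ u ≤ 0`, so `ℓ` kills the whole basis.
  by_contra! hP
  have hcoord (d) : δ / 2 * |ℓ (e d)| ≤ ℓ u := by
    have h₁ := hP _ (mem_union_left _ (mem_image_of_mem _ (mem_univ d)))
    have h₂ := hP _ (mem_union_right _ (mem_image_of_mem _ (mem_univ d)))
    simp only [map_add, map_sub, map_smul, smul_eq_mul] at h₁ h₂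
    cases abs_cases (ℓ (e d)) <;> nlinarith
  have hexpand : ℓ (u - ψ) = ∑ d, ⟪e d, u - ψ⟫ * ℓ (e d) := by
    conv_lhs => rw [← e.sum_repr' (u - ψ)]
    simp [map_sum]
  have hterm (d) : ⟪e d, u - ψ⟫ * ℓ (e d) ≤ dist ψ u * (2 / δ * ℓ u) := by
    have hinner : |⟪e d, u - ψ⟫| ≤ dist ψ u := by
      simpa [e.orthonormal.1 d, dist_comm, dist_eq_norm] using
        abs_real_inner_le_norm (e d) (u - ψ)
    have hℓd : |ℓ (e d)| ≤ 2 / δ * ℓ u := by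
      rw [div_mul_eq_mul_div, le_div_iff₀ hδ]; linarith [hcoord d]
    calc ⟪e d, u - ψ⟫ * ℓ (e d) ≤ |⟪e d, u - ψ⟫ * ℓ (e d)| := le_abs_self _
      _ = |⟪e d, u - ψ⟫| * |ℓ (e d)| := abs_mul _ _
      _ ≤ dist ψ u * (2 / δ * ℓ u) :=
        mul_le_mul hinner hℓd (abs_nonneg _) dist_nonneg
  have hsmall : n * dist ψ u * (2 / δ) < 1 := by
    rw [lt_div_iff₀ (by positivity)] at hψ
    rw [mul_assoc, mul_div_assoc', mul_div_assoc', div_lt_one hδ]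
    nlinarith
  have hℓu : ℓ u ≤ 0 := by
    have : ℓ u ≤ n * dist ψ u * (2 / δ) * ℓ u := by
      calc ℓ u = ℓ ψ + ℓ (u - ψ) := by rw [map_sub]; ring
        _ ≤ ∑ d, ⟪e d, u - ψ⟫ * ℓ (e d) := by rw [hexpand]; linarith
        _ ≤ ∑ _d, dist ψ u * (2 / δ * ℓ u) := sum_le_sum fun d _ ↦ hterm d
        _ = n * dist ψ u * (2 / δ) * ℓ u := by simp [n]; ring
    nlinarith
  refine hℓ (e.toBasis.ext fun d ↦ ?_)
  have := hcoord d
  have := abs_nonneg (ℓ (e d))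
  simp only [OrthonormalBasis.coe_toBasis, LinearMap.zero_apply]
  exact abs_eq_zero.mp (by nlinarith)

end TestPoints

/-- Every point `u` of the interior `Cone(J)°` of the Tits cone intersection
(taken inside `Θ_J`) has an open ball around it meeting only finitely many hyperplanes of `𝓗_J`;
in particular `(Cone(J)°, 𝓗_J)` is a locally finite arrangement. -/
theorem coneJ_arrangement_locally_finite (r : ReflRep cs (EuclideanSpace ℝ B)) (J : Set B)
    (u : EuclideanSpace ℝ B) (hu : u ∈ coneJ r J)
    (hu_int : ∃ δ > 0, ∀ ψ ∈ ThetaJ r J, dist ψ u < δ → ψ ∈ coneJ r J) :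
    ∃ ε > 0, {S ∈ arrangementJ r J | (S ∩ Metric.ball u ε).Nonempty}.Finite := by
  obtain ⟨δ, hδ, hball⟩ := hu_int
  set K := thetaJSubmodule r J
  obtain ⟨ε, hε, P, hPδ, hP⟩ := exists_finset_exists_neg_of_ne_zero (⟨u, hu.2⟩ : K) hδ
  refine ⟨ε, hε, ?_⟩
  have hPcone : ∀ p ∈ P, (p : EuclideanSpace ℝ B) ∈ titsCone r :=
    fun p hp ↦ (hball p p.2 (hPδ p hp)).1
  refine ((P.finite_toSet.biUnion fun p hp ↦ r.finite_hyperplaneOf_of_mem_titsCone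
    (hPcone p hp)).image (· ∩ ThetaJ r J)).subset ?_
  rintro _ ⟨⟨α, hα, hαJ, rfl⟩, ψ, ⟨hψα, hψJ⟩, hψu⟩
  obtain ⟨χ, hχJ, hχα⟩ := Set.not_subset.1 hαJ
  obtain ⟨p, hp, hpα⟩ := hP ((innerₛₗ ℝ α).comp K.subtype)
    (fun h ↦ hχα <| by simpa [hyperplaneOf, real_inner_comm] using LinearMap.congr_fun h ⟨χ, hχJ⟩)
    ⟨ψ, hψJ⟩ hψu (by simpa [real_inner_comm] using hψα.le)
  have hpα' : ⟪(p : EuclideanSpace ℝ B), α⟫ < 0 := by simpa [real_inner_comm] using hpα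
  exact ⟨hyperplaneOf α, Set.mem_biUnion hp ⟨α, ⟨hα, hpα'⟩, rfl⟩, rfl⟩
end

section
/- The quotient group N(W,J) = Norm_W(W_J)/W_J acts faithfully on the set Cham(J), where g·(x,I) = (y,I) with y the minimal length representative of the coset g x W_I. Moreover, this action is transitive on chambers with the same second label: for any (x,I),(y,I) ∈ Cham(J), the element yx^{-1} lies in Norm_W(W_J) and maps (x,I) to (y,I). -/
/-! The content is that a coset `c W_I` of a standard parabolic subgroup has a unique element of
minimal length: if `u` is minimal in `u W_I` then `ℓ (u v) = ℓ u + ℓ v` for `v ∈ W_I`. Otherwise a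
reduced word for `u` followed by a reduced `I`-word for `v` loses two letters by the deletion
property; losing a letter of the first word would produce a shorter element of `u W_I`, losing
only letters of the second would shorten `v`. The deletion property comes from the exchange
property, which we derive from Tits' parity argument: the involutions
`(t, ε) ↦ (s t s, ε + [t = s])` of `W × ZMod 2` satisfy the Coxeter relations, so the parity of
the number of occurrences of `t` in the right inversion sequence of a word depends only on the
element the word represents.

Everything else is coset bookkeeping: `W_J x = x W_I` says that conjugation by `x⁻¹` carries
`W_J` onto `W_I`. -/

open CoxeterSystem

/-- `(x, I)` is a chamber label in `Cham(J)`. -/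
def IsChamberLabel {B W : Type*} [Group W] {M : CoxeterMatrix B} (cs : CoxeterSystem M W)
    (J : Set B) (x : W) (I : Set B) : Prop :=
  ((· * x) '' (parabolic cs J : Set W) = (x * ·) '' (parabolic cs I : Set W)) ∧
  ∀ v ∈ parabolic cs I, cs.length x ≤ cs.length (x * v)

namespace Subgroup

open Pointwise

variable {G : Type*} [Group G] {H K : Subgroup G} {x : G}

theorem image_mul_right_eq_image_mul_left_iff :
    (· * x) '' (H : Set G) = (x * ·) '' (K : Set G) ↔ ∀ u, u ∈ H ↔ x⁻¹ * u * x ∈ K := by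
  rw [Set.image_mul_right, Set.image_mul_left, Set.ext_iff]
  refine ((Equiv.mulRight x).forall_congr fun u => ?_).symm
  simp [mul_assoc]

theorem image_mul_left_mul_eq_iff_mem (hx : ∀ u, u ∈ H ↔ x⁻¹ * u * x ∈ K) (g : G) :
    (g * x * ·) '' (K : Set G) = (x * ·) '' (K : Set G) ↔ g ∈ H := by
  change (g * x) • (K : Set G) = x • (K : Set G) ↔ _
  rw [leftCoset_eq_iff, hx, ← inv_mem_iff]
  group

theorem mul_inv_mem_normalizer {y : G} (hx : ∀ u, u ∈ H ↔ x⁻¹ * u * x ∈ K)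
    (hy : ∀ u, u ∈ H ↔ y⁻¹ * u * y ∈ K) : y * x⁻¹ ∈ normalizer (H : Set G) := by
  refine mem_normalizer_iff''.mpr fun u => ?_
  rw [hy, hx]
  group

theorem conj_mem_iff_of_mem_normalizer {g v : G} (hg : g ∈ normalizer (H : Set G))
    (hx : ∀ u, u ∈ H ↔ x⁻¹ * u * x ∈ K) (hv : v ∈ K) (u : G) :
    u ∈ H ↔ (g * x * v)⁻¹ * u * (g * x * v) ∈ K := by
  rw [mem_normalizer_iff''.mp hg, hx,
    mem_normalizer_iff''.mp (K.le_normalizer hv)]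
  group

end Subgroup

namespace CoxeterSystem

open List

variable {B W : Type*} [Group W] {M : CoxeterMatrix B} (cs : CoxeterSystem M W)

local prefix:100 "s " => cs.simple
local prefix:100 "π " => cs.wordProd
local prefix:100 "ℓ " => cs.length
local prefix:100 "ris " => cs.rightInvSeq
local prefix:100 "lis " => cs.leftInvSeq

theorem alternatingWord_two_mul_succ (i i' : B) (m : ℕ) :
    alternatingWord i i' (2 * (m + 1)) = i :: i' :: alternatingWord i i' (2 * m) := by
  rw [show 2 * (m + 1) = 2 * m + 1 + 1 by ring, alternatingWord_succ', alternatingWord_succ']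
  simp

theorem reverse_alternatingWord_two_mul (i i' : B) (m : ℕ) :
    (alternatingWord i i' (2 * m)).reverse = alternatingWord i' i (2 * m) := by
  induction m with
  | zero => rfl
  | succ m ih =>
    rw [alternatingWord_two_mul_succ, reverse_cons, reverse_cons, ih,
      show 2 * (m + 1) = 2 * m + 1 + 1 by ring, alternatingWord_succ, alternatingWord_succ]
    simp

theorem prod_map_alternatingWord_two_mul {G : Type*} [Monoid G] (f : B → G) (i i' : B) (m : ℕ) :
    ((alternatingWord i i' (2 * m)).map f).prod = (f i * f i') ^ m := by
  induction m with
  | zero => simp [alternatingWord]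
  | succ m ih => rw [alternatingWord_two_mul_succ, map_cons, map_cons, prod_cons, prod_cons, ih,
      pow_succ', mul_assoc]

theorem leftInvSeq_alternatingWord_two_mul (i i' : B) (m : ℕ) :
    lis (alternatingWord i' i (2 * m)) =
      (range (2 * m)).map fun k => s i' * (s i * s i') ^ k := by
  refine ext_getElem (by simp) fun k hk _ => ?_
  rw [getElem_leftInvSeq_alternatingWord cs i' i m k (by simpa using hk),
    prod_alternatingWord_eq_mul_pow, getElem_map, getElem_range,
    show (2 * k + 1) / 2 = k by omega]
  simp

theorem even_count_rightInvSeq_alternatingWord {i i' : B} {m : ℕ} (hm : (s i * s i') ^ m = 1)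
    [DecidableEq W] (t : W) : Even ((ris (alternatingWord i i' (2 * m))).count t) := by
  have hperiodic : ((fun k => s i' * (s i * s i') ^ k) ∘ fun k => m + k) =
      fun k => s i' * (s i * s i') ^ k := by
    funext k
    simp [pow_add, hm]
  rw [← reverse_alternatingWord_two_mul i' i, rightInvSeq_reverse, count_reverse,
    leftInvSeq_alternatingWord_two_mul, two_mul, range_add, map_append, map_map, hperiodic,
    count_append]
  exact Even.add_self _

theorem simple_mul_mul_simple_eq_simple_iff (i : B) (t : W) : s i * t * s i = s i ↔ t = s i := by
  rw [mul_eq_right, mul_eq_one_iff_inv_eq, inv_simple, eq_comm]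

section TitsParity

variable [DecidableEq W]

def titsPerm (i : B) : Equiv.Perm (W × ZMod 2) :=
  Function.Involutive.toPerm (fun q => (s i * q.1 * s i, q.2 + if q.1 = s i then 1 else 0)) <| by
    rintro ⟨t, ε⟩
    ext
    · simp [mul_assoc]
    · simp only [simple_mul_mul_simple_eq_simple_iff, add_assoc, CharTwo.add_self_eq_zero, add_zero]

theorem titsPerm_apply (i : B) (t : W) (ε : ZMod 2) :
    titsPerm cs i (t, ε) = (s i * t * s i, ε + if t = s i then 1 else 0) := rfl

theorem prod_map_titsPerm_apply (ω : List B) (t : W) (ε : ZMod 2) :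
    (ω.map (titsPerm cs)).prod (t, ε) = (π ω * t * (π ω)⁻¹, ε + (ris ω).count t) := by
  induction ω with
  | nil => simp
  | cons i ω ih =>
    have hconj : π ω * t * (π ω)⁻¹ = s i ↔ (π ω)⁻¹ * s i * π ω = t := by
      constructor <;> intro h <;> rw [← h] <;> group
    rw [map_cons, prod_cons, Equiv.Perm.mul_apply, ih, titsPerm_apply, rightInvSeq, wordProd_cons,
      count_cons]
    ext
    · simp [mul_assoc]
    · by_cases h : (π ω)⁻¹ * s i * π ω = t <;> simp [h, hconj, add_assoc]

theorem isLiftable_titsPerm : M.IsLiftable (titsPerm cs) := by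
  intro i i'
  have hp : π alternatingWord i i' (2 * M i i') = 1 := by
    rw [prod_alternatingWord_eq_mul_pow]
    simp
  ext ⟨t, ε⟩ : 1
  rw [← prod_map_alternatingWord_two_mul, prod_map_titsPerm_apply, hp,
    (ZMod.natCast_eq_zero_iff_even).mpr (cs.even_count_rightInvSeq_alternatingWord
      (cs.simple_mul_simple_pow i i') t)]
  simp

theorem count_rightInvSeq_mod_two_eq {ω ω' : List B} (h : π ω = π ω') (t : W) :
    (ris ω).count t % 2 = (ris ω').count t % 2 := by
  have hlift (ω : List B) :
      cs.lift ⟨_, cs.isLiftable_titsPerm⟩ (π ω) = (ω.map (titsPerm cs)).prod := by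
    rw [wordProd, map_list_prod, map_map]
    congr 2
    funext i
    exact cs.lift_apply_simple cs.isLiftable_titsPerm i
  have := congrArg (fun w => (cs.lift ⟨_, cs.isLiftable_titsPerm⟩ w (t, 0)).2) h
  simp only [hlift, prod_map_titsPerm_apply, zero_add] at this
  exact (ZMod.natCast_eq_natCast_iff' _ _ 2).mp this

end TitsParity

variable {cs} in
theorem IsReduced.rightInvSeq_subset {ω ω' : List B} (hω : cs.IsReduced ω) (h : π ω = π ω') :
    ris ω ⊆ ris ω' := by
  classical
  intro t ht
  have hparity := cs.count_rightInvSeq_mod_two_eq h t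
  rw [count_eq_one_of_mem (hω.nodup_rightInvSeq cs) ht] at hparity
  exact count_pos_iff.mp (by omega)

theorem exists_eraseIdx_of_isRightDescent {ω : List B} {i : B} (h : cs.IsRightDescent (π ω) i) :
    ∃ j < ω.length, π ω * s i = π (ω.eraseIdx j) := by
  obtain ⟨σ, hσ, hσω⟩ := cs.exists_isReduced (π ω * s i)
  have hprod : π (σ.concat i) = π ω := by
    rw [wordProd_concat, ← hσω, simple_mul_simple_cancel_right]
  have hred : cs.IsReduced (σ.concat i) := by
    have := cs.length_mul_simple (π ω) i
    rw [IsRightDescent] at h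
    rw [IsReduced, hprod, length_concat, ← hσ.eq, ← hσω]
    omega
  have hmem : s i ∈ ris ω := hred.rightInvSeq_subset hprod (by rw [rightInvSeq_concat]; simp)
  obtain ⟨j, hj, hget⟩ := getElem_of_mem hmem
  refine ⟨j, by simpa using hj, ?_⟩
  rw [← wordProd_mul_getD_rightInvSeq, getD_eq_getElem _ _ hj, hget]

theorem exists_sublist_of_not_isReduced {ω : List B} (h : ¬cs.IsReduced ω) :
    ∃ ω' : List B, ω'.Sublist ω ∧ ω'.length + 2 = ω.length ∧ π ω' = π ω := by
  induction ω using reverseRecOn with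
  | nil => exact absurd (by simp [IsReduced]) h
  | append_singleton ω i ih =>
    by_cases hω : cs.IsReduced ω
    · have hdesc : cs.IsRightDescent (π ω) i := by
        rcases cs.length_mul_simple (π ω) i with hlen | hlen
        · refine absurd ?_ h
          rw [IsReduced, wordProd_append, wordProd_singleton, hlen, hω.eq, length_append,
            length_singleton]
        · rw [IsRightDescent]
          omega
      obtain ⟨j, hj, hjω⟩ := cs.exists_eraseIdx_of_isRightDescent hdesc
      refine ⟨ω.eraseIdx j, (eraseIdx_sublist _ _).trans (sublist_append_left _ _), ?_, ?_⟩
      · rw [length_eraseIdx_of_lt hj, length_append, length_singleton]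
        omega
      · rw [wordProd_append, wordProd_singleton, hjω]
    · obtain ⟨ω', hsub, hlen, hprod⟩ := ih hω
      refine ⟨ω' ++ [i], hsub.append_right _, ?_, ?_⟩
      · simp [hlen]
      · rw [wordProd_append, wordProd_append, hprod]

theorem wordProd_mem_parabolic {I : Set B} {ω : List B} (hω : ∀ i ∈ ω, i ∈ I) :
    π ω ∈ parabolic cs I := by
  refine (parabolic cs I).list_prod_mem fun w hw => ?_
  obtain ⟨i, hi, rfl⟩ := mem_map.mp hw
  exact Subgroup.subset_closure ⟨i, hω i hi, rfl⟩

theorem exists_wordProd_eq_of_mem_parabolic {I : Set B} {w : W} (hw : w ∈ parabolic cs I) :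
    ∃ ω : List B, (∀ i ∈ ω, i ∈ I) ∧ π ω = w := by
  induction hw using Subgroup.closure_induction with
  | mem _ hw =>
    obtain ⟨i, hi, rfl⟩ := hw
    exact ⟨[i], by simpa using hi, wordProd_singleton cs i⟩
  | one => exact ⟨[], by simp, wordProd_nil cs⟩
  | mul _ _ _ _ ih₁ ih₂ =>
    obtain ⟨ω₁, h₁, rfl⟩ := ih₁
    obtain ⟨ω₂, h₂, rfl⟩ := ih₂
    exact ⟨ω₁ ++ ω₂, fun i hi => (mem_append.mp hi).elim (h₁ i) (h₂ i), wordProd_append cs ω₁ ω₂⟩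
  | inv _ _ ih =>
    obtain ⟨ω, hω, rfl⟩ := ih
    exact ⟨ω.reverse, fun i hi => hω i (mem_reverse.mp hi), wordProd_reverse cs ω⟩

theorem exists_isReduced_of_mem_parabolic {I : Set B} {w : W} (hw : w ∈ parabolic cs I) :
    ∃ ω : List B, (∀ i ∈ ω, i ∈ I) ∧ cs.IsReduced ω ∧ π ω = w := by
  obtain ⟨ω, hωI, rfl⟩ := cs.exists_wordProd_eq_of_mem_parabolic hw
  clear hw
  induction hn : ω.length using Nat.strong_induction_on generalizing ω with
  | _ n ih =>
    by_cases hω : cs.IsReduced ω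
    · exact ⟨ω, hωI, hω, rfl⟩
    obtain ⟨ω', hsub, hlen, hprod⟩ := cs.exists_sublist_of_not_isReduced hω
    obtain ⟨ω'', hI, hred, h⟩ :=
      ih ω'.length (by omega) ω' (fun i hi => hωI i (hsub.subset hi)) rfl
    exact ⟨ω'', hI, hred, h.trans hprod⟩

theorem length_mul_eq_add_of_forall_length_le {I : Set B} {u v : W}
    (hu : ∀ v ∈ parabolic cs I, ℓ u ≤ ℓ (u * v)) (hv : v ∈ parabolic cs I) :
    ℓ (u * v) = ℓ u + ℓ v := by
  obtain ⟨σ, hσ, rfl⟩ := cs.exists_isReduced u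
  obtain ⟨τ, hτI, hτ, rfl⟩ := cs.exists_isReduced_of_mem_parabolic hv
  refine le_antisymm (cs.length_mul_le _ _) (not_lt.mp fun hlt => ?_)
  have hnred : ¬cs.IsReduced (σ ++ τ) := by
    rw [IsReduced, wordProd_append, length_append, ← hσ.eq, ← hτ.eq]
    exact hlt.ne
  obtain ⟨ω', hsub, hlen, hprod⟩ := cs.exists_sublist_of_not_isReduced hnred
  obtain ⟨σ', τ', rfl, hσ', hτ'⟩ := sublist_append_iff.mp hsub
  rw [wordProd_append, wordProd_append] at hprod
  -- `π σ'` lies in the coset `π σ W_I`, so it cannot be shorter than `π σ`.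
  have hσ'_mem : (π σ)⁻¹ * π σ' ∈ parabolic cs I := by
    rw [show (π σ)⁻¹ * π σ' = π τ * (π τ')⁻¹ by
      rw [inv_mul_eq_iff_eq_mul, ← mul_assoc, eq_mul_inv_iff_mul_eq, hprod]]
    exact mul_mem (cs.wordProd_mem_parabolic hτI)
      (inv_mem (cs.wordProd_mem_parabolic fun i hi => hτI i (hτ'.subset hi)))
  have hσσ' : σ' = σ := by
    refine hσ'.eq_of_length (le_antisymm hσ'.length_le ?_)
    have := hu _ hσ'_mem
    rw [mul_inv_cancel_left, hσ.eq] at this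
    exact this.trans (cs.length_wordProd_le σ')
  subst hσσ'
  have hττ' : π τ' = π τ := mul_left_cancel hprod
  have := cs.length_wordProd_le τ'
  rw [length_append, length_append] at hlen
  rw [hττ', hτ.eq] at this
  omega

variable {cs}

theorem length_le_length_mul_of_forall_length_le {I : Set B} {c y : W}
    (hy : y ∈ (c * ·) '' (parabolic cs I : Set W))
    (hmin : ∀ z ∈ (c * ·) '' (parabolic cs I : Set W), ℓ y ≤ ℓ z) :
    ∀ v ∈ parabolic cs I, ℓ y ≤ ℓ (y * v) := by
  obtain ⟨a, ha, rfl⟩ := hy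
  exact fun v hv => hmin _ ⟨a * v, mul_mem ha hv, (mul_assoc c a v).symm⟩

theorem eq_of_forall_length_le {I : Set B} {c y y' : W}
    (hy : y ∈ (c * ·) '' (parabolic cs I : Set W))
    (hmin : ∀ z ∈ (c * ·) '' (parabolic cs I : Set W), ℓ y ≤ ℓ z)
    (hy' : y' ∈ (c * ·) '' (parabolic cs I : Set W)) (hle : ℓ y' ≤ ℓ y) : y' = y := by
  obtain ⟨a, ha, rfl⟩ := hy
  obtain ⟨b, hb, rfl⟩ := hy'
  have hadd := length_mul_eq_add_of_forall_length_le cs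
    (length_le_length_mul_of_forall_length_le ⟨a, ha, rfl⟩ hmin) (mul_mem (inv_mem ha) hb)
  simp only [mul_assoc, mul_inv_cancel_left] at hadd hle
  have hab : a⁻¹ * b = 1 := cs.length_eq_zero_iff.mp (by omega)
  rw [inv_mul_eq_one.mp hab]

variable (cs) in
theorem existsUnique_forall_length_le (c : W) (I : Set B) :
    ∃! y, y ∈ (c * ·) '' (parabolic cs I : Set W) ∧
      ∀ z ∈ (c * ·) '' (parabolic cs I : Set W), ℓ y ≤ ℓ z := by
  set C := (c * ·) '' (parabolic cs I : Set W)
  have hC : C.Nonempty := ⟨c, 1, one_mem _, mul_one c⟩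
  have hmem : Function.argminOn cs.length C hC ∈ C := Function.argminOn_mem _ _ hC
  have hmin : ∀ z ∈ C, ℓ (Function.argminOn cs.length C hC) ≤ ℓ z :=
    fun z hz => Function.argminOn_le _ _ hz
  exact ⟨_, ⟨hmem, hmin⟩,
    fun y' ⟨hy', hy'min⟩ => eq_of_forall_length_le hmem hmin hy' (hy'min _ hmem)⟩

end CoxeterSystem

section Chambers

variable {B W : Type*} [Group W] {M : CoxeterMatrix B} {cs : CoxeterSystem M W} {J I : Set B}
  {x : W}

theorem IsChamberLabel.conj_mem_iff (hx : IsChamberLabel cs J x I) (u : W) :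
    u ∈ parabolic cs J ↔ x⁻¹ * u * x ∈ parabolic cs I :=
  Subgroup.image_mul_right_eq_image_mul_left_iff.mp hx.1 u

theorem IsChamberLabel.of_forall_length_le {g y : W}
    (hg : g ∈ Subgroup.normalizer (parabolic cs J : Set W)) (hx : IsChamberLabel cs J x I)
    (hy : y ∈ (g * x * ·) '' (parabolic cs I : Set W))
    (hmin : ∀ z ∈ (g * x * ·) '' (parabolic cs I : Set W), cs.length y ≤ cs.length z) :
    IsChamberLabel cs J y I := by
  refine ⟨?_, CoxeterSystem.length_le_length_mul_of_forall_length_le hy hmin⟩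
  obtain ⟨v, hv, rfl⟩ := hy
  exact Subgroup.image_mul_right_eq_image_mul_left_iff.mpr
    (Subgroup.conj_mem_iff_of_mem_normalizer hg hx.conj_mem_iff hv)

end Chambers

/-- The quotient `N(W,J) = Norm_W(W_J)/W_J` acts faithfully on `Cham(J)` by
`g · (x,I) = (y,I)` with `y` the minimal-length representative of `g x W_I`, and the action is
transitive on chambers with the same second label.  Concretely:
(1) minimal-length representatives of `g x W_I` exist and are unique, and yield chambers;
(2) elements of `W_J` act trivially;
(3) faithfulness: if `g` in the normaliser fixes a chamber, i.e. `g x W_I = x W_I`, then `g ∈ W_J`;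
(4) transitivity on first labels: for chambers `(x,I)`, `(y,I)`, the element `y x⁻¹` lies in the
normaliser of `W_J` and sends `(x,I)` to `(y,I)` (i.e. `(yx⁻¹) x W_I = y W_I`). -/
theorem normaliser_quotient_action_on_chambers {B W : Type*} [Group W]
    {M : CoxeterMatrix B} (cs : CoxeterSystem M W) (J : Set B) :
    (∀ g ∈ Subgroup.normalizer (parabolic cs J : Set W), ∀ (x : W) (I : Set B), IsChamberLabel cs J x I →
      (∃! y : W, y ∈ ((g * x) * ·) '' (parabolic cs I : Set W) ∧
        ∀ z ∈ ((g * x) * ·) '' (parabolic cs I : Set W), cs.length y ≤ cs.length z) ∧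
      (∀ y : W, (y ∈ ((g * x) * ·) '' (parabolic cs I : Set W) ∧
          ∀ z ∈ ((g * x) * ·) '' (parabolic cs I : Set W), cs.length y ≤ cs.length z) →
        IsChamberLabel cs J y I)) ∧
    (∀ g ∈ parabolic cs J, ∀ (x : W) (I : Set B), IsChamberLabel cs J x I →
      ((g * x) * ·) '' (parabolic cs I : Set W) = (x * ·) '' (parabolic cs I : Set W)) ∧
    (∀ g ∈ Subgroup.normalizer (parabolic cs J : Set W), ∀ (x : W) (I : Set B), IsChamberLabel cs J x I →
      ((g * x) * ·) '' (parabolic cs I : Set W) = (x * ·) '' (parabolic cs I : Set W) →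
      g ∈ parabolic cs J) ∧
    (∀ (x y : W) (I : Set B), IsChamberLabel cs J x I → IsChamberLabel cs J y I →
      y * x⁻¹ ∈ Subgroup.normalizer (parabolic cs J : Set W) ∧
      (((y * x⁻¹) * x) * ·) '' (parabolic cs I : Set W) = (y * ·) '' (parabolic cs I : Set W)) := by
  refine ⟨fun g hg x I hx => ⟨cs.existsUnique_forall_length_le (g * x) I,
      fun y ⟨hy, hmin⟩ => hx.of_forall_length_le hg hy hmin⟩,
    fun g hg x I hx => (Subgroup.image_mul_left_mul_eq_iff_mem hx.conj_mem_iff g).mpr hg,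
    fun g _ x I hx => (Subgroup.image_mul_left_mul_eq_iff_mem hx.conj_mem_iff g).mp,
    fun x y I hx hy => ⟨Subgroup.mul_inv_mem_normalizer hx.conj_mem_iff hy.conj_mem_iff,
      by rw [inv_mul_cancel_right]⟩⟩
end

section
/- Let F: G̃ → G be a normal groupoid covering of connected groupoids. Then for any object x of G and any x̃ ∈ F^{-1}(x), there is a short exact sequence of groups 1 → G̃_{x̃} → G_x → Deck(F) → 1, where G̃_{x̃} and G_x are the vertex groups. -/
open CategoryTheory

universe v u

/-- The star of an object in a groupoid: all morphisms out of it. -/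
def GroupoidStar (C : Type u) [Groupoid.{v} C] (x : C) : Type (max u v) := Σ y : C, x ⟶ y

/-- The map induced by a functor on stars. -/
def starMap {C : Type u} {D : Type u} [Groupoid.{v} C] [Groupoid.{v} D] (F : C ⥤ D) (x : C) :
    GroupoidStar C x → GroupoidStar D (F.obj x) :=
  fun p => ⟨F.obj p.1, F.map p.2⟩

/-- A functor of groupoids is a covering if every morphism downstairs lifts uniquely once a lift
of its source is chosen; equivalently, it induces bijections on stars. -/
def IsGroupoidCovering {C : Type u} {D : Type u} [Groupoid.{v} C] [Groupoid.{v} D]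
    (F : C ⥤ D) : Prop :=
  ∀ x : C, Function.Bijective (starMap F x)

/-- The deck transformation group of a functor `F : C ⥤ D`: automorphisms `φ` of `C` with
`φ ⋙ F = F` (strictly), i.e. automorphisms of the object `(C, F)` of the over-category
`Cat / D`. -/
def Deck {C : Type u} {D : Type u} [Groupoid.{v} C] [Groupoid.{v} D] (F : C ⥤ D) :=
  Aut (Over.mk (show Cat.of C ⟶ Cat.of D from F.toCatHom))

noncomputable instance {C : Type u} {D : Type u} [Groupoid.{v} C] [Groupoid.{v} D]
    (F : C ⥤ D) : Group (Deck F) := by unfold Deck; infer_instance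

/-- The underlying functor `C ⥤ C` of a deck transformation. -/
def Deck.toFunctor {C : Type u} {D : Type u} [Groupoid.{v} C] [Groupoid.{v} D] {F : C ⥤ D}
    (φ : Deck F) : C ⥤ C := φ.hom.left.toFunctor

/-- A covering is normal if the deck group acts transitively on fibres over objects. -/
def IsNormalCovering {C : Type u} {D : Type u} [Groupoid.{v} C] [Groupoid.{v} D]
    (F : C ⥤ D) : Prop :=
  ∀ x y : C, F.obj x = F.obj y → ∃ φ : Deck F, (Deck.toFunctor φ).obj x = y

/-- The homomorphism of vertex groups induced by a functor. -/
def vertexHom {C : Type u} {D : Type u} [Groupoid.{v} C] [Groupoid.{v} D] (F : C ⥤ D)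
    (x : C) : (x ⟶ x) →* (F.obj x ⟶ F.obj x) where
  toFun f := F.map f
  map_one' := F.map_id x
  map_mul' f g := F.map_comp f g

/-!
Deck transformations are lifts of `F` along itself, so by unique lifting in a connected groupoid
a deck transformation is determined by the image of a single object. Lifting a loop `g` at
`F(xt)` from `xt` ends at a point of the fibre, and normality provides the (hence unique) deck
transformation `ψ g` sending `xt` there. Every deck transformation `φ` arises this way, from the
image of any morphism `xt ⟶ φ xt`, and `ψ g = 1` exactly when the lift of `g` is a loop, i.e.
when `g` comes from the vertex group of `xt`.
-/

section Covering

variable {C : Type u} {D : Type u} [Groupoid.{v} C] [Groupoid.{v} D] {F : C ⥤ D}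

lemma GroupoidStar.ext {x : C} {p q : GroupoidStar C x} (h : p.1 = q.1)
    (hf : p.2 ≫ eqToHom h = q.2) : p = q := by
  obtain ⟨y, f⟩ := p
  obtain ⟨z, g⟩ := q
  dsimp only at h
  subst h
  simp only [eqToHom_refl, Category.comp_id] at hf
  rw [hf]

namespace Deck

lemma toFunctor_comp (φ : Deck F) : φ.toFunctor ⋙ F = F :=
  congrArg Cat.Hom.toFunctor (Over.w φ.hom)

lemma obj_toFunctor_obj (φ : Deck F) (y : C) : F.obj (φ.toFunctor.obj y) = F.obj y :=
  Functor.congr_obj φ.toFunctor_comp y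

lemma map_toFunctor_map (φ : Deck F) {y z : C} (f : y ⟶ z) :
    F.map (φ.toFunctor.map f) =
      eqToHom (φ.obj_toFunctor_obj y) ≫ F.map f ≫ eqToHom (φ.obj_toFunctor_obj z).symm := by
  simpa using Functor.congr_hom φ.toFunctor_comp f

lemma toFunctor_mul (φ φ' : Deck F) : (φ * φ').toFunctor = φ'.toFunctor ⋙ φ.toFunctor := rfl

lemma ext_of_toFunctor_eq {φ φ' : Deck F} (h : φ.toFunctor = φ'.toFunctor) : φ = φ' :=
  Iso.ext (CommaMorphism.ext (Cat.Hom.ext h) (Subsingleton.elim _ _))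

end Deck

namespace IsGroupoidCovering

lemma star_ext (hcov : IsGroupoidCovering F) {x : C} {p q : GroupoidStar C x}
    (h : F.obj p.1 = F.obj q.1) (hf : F.map p.2 ≫ eqToHom h = F.map q.2) : p = q :=
  (hcov x).1 (GroupoidStar.ext (p := starMap F x p) (q := starMap F x q) h hf)

lemma faithful (hcov : IsGroupoidCovering F) : F.Faithful where
  map_injective {x y} f g hfg :=
    eq_of_heq (Sigma.mk.inj_iff.mp (hcov.star_ext (p := ⟨y, f⟩) (q := ⟨y, g⟩) rfl
      (by simpa using hfg))).2

lemma functor_ext_of_obj_eq (hcov : IsGroupoidCovering F) {E : Type*} [Groupoid E]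
    (hconn : ∀ e e' : E, Nonempty (e ⟶ e')) {G₁ G₂ : E ⥤ C} (hG : G₁ ⋙ F = G₂ ⋙ F) (e : E)
    (he : G₁.obj e = G₂.obj e) : G₁ = G₂ := by
  have lifts_eq : ∀ {y : E} (f : e ⟶ y), (⟨G₁.obj y, G₁.map f⟩ : GroupoidStar C (G₁.obj e)) =
      ⟨G₂.obj y, eqToHom he ≫ G₂.map f⟩ := fun f =>
    hcov.star_ext (Functor.congr_obj hG _) (by
      rw [← Functor.comp_map, Functor.congr_hom hG f]
      simp [eqToHom_map])
  have hobj : ∀ y, G₁.obj y = G₂.obj y := fun y =>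
    congrArg Sigma.fst (lifts_eq (hconn e y).some)
  have hmap : ∀ {y : E} (f : e ⟶ y),
      G₁.map f = eqToHom he ≫ G₂.map f ≫ eqToHom (hobj y).symm := fun f => by
    simpa using (conj_eqToHom_iff_heq _ _ rfl (hobj _)).mpr (Sigma.mk.inj_iff.mp (lifts_eq f)).2
  refine CategoryTheory.Functor.ext hobj fun y z f => ?_
  obtain ⟨a⟩ := hconn e y
  rw [← cancel_epi (G₁.map a), ← G₁.map_comp, hmap (a ≫ f), hmap a]
  simp

lemma deck_eq_of_obj_eq (hcov : IsGroupoidCovering F) (hconn : ∀ x y : C, Nonempty (x ⟶ y))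
    {φ φ' : Deck F} {x : C} (h : φ.toFunctor.obj x = φ'.toFunctor.obj x) : φ = φ' :=
  Deck.ext_of_toFunctor_eq <| hcov.functor_ext_of_obj_eq hconn
    (φ.toFunctor_comp.trans φ'.toFunctor_comp.symm) x h

noncomputable def lift (hcov : IsGroupoidCovering F) (x : C) {d : D} (g : F.obj x ⟶ d) :
    GroupoidStar C x :=
  (Equiv.ofBijective _ (hcov x)).symm ⟨d, g⟩

lemma obj_lift (hcov : IsGroupoidCovering F) (x : C) {d : D} (g : F.obj x ⟶ d) :
    F.obj (hcov.lift x g).1 = d :=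
  congrArg Sigma.fst ((Equiv.ofBijective _ (hcov x)).apply_symm_apply ⟨d, g⟩)

lemma map_lift (hcov : IsGroupoidCovering F) (x : C) {d : D} (g : F.obj x ⟶ d) :
    F.map (hcov.lift x g).2 = g ≫ eqToHom (hcov.obj_lift x g).symm := by
  have h := ((Equiv.ofBijective _ (hcov x)).apply_symm_apply ⟨d, g⟩)
  have h' := (conj_eqToHom_iff_heq _ _ rfl (hcov.obj_lift x g)).mpr (Sigma.ext_iff.mp h).2
  rw [eqToHom_refl, Category.id_comp] at h'
  exact h'

lemma lift_eq (hcov : IsGroupoidCovering F) {x y : C} {d : D} (g : F.obj x ⟶ d) (f : x ⟶ y)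
    (h : F.obj y = d) (hf : F.map f ≫ eqToHom h = g) : hcov.lift x g = ⟨y, f⟩ :=
  hcov.star_ext ((hcov.obj_lift x g).trans h.symm) (by simp [map_lift, ← hf])

lemma mem_range_vertexHom_iff (hcov : IsGroupoidCovering F) {x : C} (g : F.obj x ⟶ F.obj x) :
    g ∈ (vertexHom F x).range ↔ (hcov.lift x g).1 = x := by
  constructor
  · rintro ⟨l, rfl⟩
    exact congrArg Sigma.fst (hcov.lift_eq (F.map l) l rfl (Category.comp_id _))
  · intro h
    refine ⟨(hcov.lift x g).2 ≫ eqToHom h, ?_⟩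
    change F.map _ = g
    simp [map_lift, eqToHom_map]

lemma deck_obj_lift_comp (hcov : IsGroupoidCovering F) {x : C} {d : D}
    {g : F.obj x ⟶ F.obj x} {h : F.obj x ⟶ d} {φ : Deck F}
    (hφ : φ.toFunctor.obj x = (hcov.lift x g).1) :
    φ.toFunctor.obj (hcov.lift x h).1 = (hcov.lift x (g ≫ h)).1 := by
  refine (congrArg Sigma.fst (hcov.lift_eq (g ≫ h)
    ((hcov.lift x g).2 ≫ eqToHom hφ.symm ≫ φ.toFunctor.map (hcov.lift x h).2)
    ((φ.obj_toFunctor_obj _).trans (hcov.obj_lift x h)) ?_)).symm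
  simp [map_lift, Deck.map_toFunctor_map, eqToHom_map]

noncomputable def monodromy (hcov : IsGroupoidCovering F) (hnorm : IsNormalCovering F) (x : C)
    (g : F.obj x ⟶ F.obj x) : Deck F :=
  (hnorm x _ (hcov.obj_lift x g).symm).choose

lemma monodromy_obj (hcov : IsGroupoidCovering F) (hnorm : IsNormalCovering F) (x : C)
    (g : F.obj x ⟶ F.obj x) : (hcov.monodromy hnorm x g).toFunctor.obj x = (hcov.lift x g).1 :=
  (hnorm x _ (hcov.obj_lift x g).symm).choose_spec

lemma eq_monodromy_iff (hcov : IsGroupoidCovering F) (hconn : ∀ x y : C, Nonempty (x ⟶ y))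
    (hnorm : IsNormalCovering F) {x : C} {g : F.obj x ⟶ F.obj x} {φ : Deck F} :
    φ = hcov.monodromy hnorm x g ↔ φ.toFunctor.obj x = (hcov.lift x g).1 := by
  refine ⟨?_, fun h => hcov.deck_eq_of_obj_eq hconn (h.trans (hcov.monodromy_obj hnorm x g).symm)⟩
  rintro rfl
  exact hcov.monodromy_obj hnorm x g

noncomputable def monodromyHom (hcov : IsGroupoidCovering F)
    (hconn : ∀ x y : C, Nonempty (x ⟶ y)) (hnorm : IsNormalCovering F) (x : C) :
    (F.obj x ⟶ F.obj x) →* Deck F where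
  toFun := hcov.monodromy hnorm x
  map_one' := Eq.symm <| (hcov.eq_monodromy_iff hconn hnorm).2 <|
    congrArg Sigma.fst (hcov.lift_eq _ (𝟙 x) rfl (by simp)).symm
  map_mul' g h := Eq.symm <| (hcov.eq_monodromy_iff hconn hnorm).2 <| by
    rw [Deck.toFunctor_mul, Functor.comp_obj, monodromy_obj]
    exact hcov.deck_obj_lift_comp (hcov.monodromy_obj hnorm x g)

lemma monodromyHom_surjective (hcov : IsGroupoidCovering F)
    (hconn : ∀ x y : C, Nonempty (x ⟶ y)) (hnorm : IsNormalCovering F) (x : C) :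
    Function.Surjective (hcov.monodromyHom hconn hnorm x) := fun φ => by
  obtain ⟨f⟩ := hconn x (φ.toFunctor.obj x)
  refine ⟨F.map f ≫ eqToHom (φ.obj_toFunctor_obj x), Eq.symm <|
    (hcov.eq_monodromy_iff hconn hnorm).2 ?_⟩
  exact congrArg Sigma.fst (hcov.lift_eq _ f _ rfl).symm

lemma ker_monodromyHom (hcov : IsGroupoidCovering F)
    (hconn : ∀ x y : C, Nonempty (x ⟶ y)) (hnorm : IsNormalCovering F) (x : C) :
    (hcov.monodromyHom hconn hnorm x).ker = (vertexHom F x).range := by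
  ext g
  rw [MonoidHom.mem_ker, hcov.mem_range_vertexHom_iff, eq_comm]
  exact (hcov.eq_monodromy_iff hconn hnorm).trans eq_comm

end IsGroupoidCovering

end Covering

theorem normal_covering_vertex_group_ses_general {C : Type u} {D : Type u}
    [Groupoid.{v} C] [Groupoid.{v} D] (F : C ⥤ D)
    (hconnC : ∀ x y : C, Nonempty (x ⟶ y))
    (hcov : IsGroupoidCovering F) (hnorm : IsNormalCovering F) (xt : C) :
    Function.Injective (vertexHom F xt) ∧
    ∃ ψ : (F.obj xt ⟶ F.obj xt) →* Deck F,
      Function.Surjective ψ ∧ ψ.ker = (vertexHom F xt).range := by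
  have := hcov.faithful
  exact ⟨fun _ _ h => F.map_injective h, hcov.monodromyHom hconnC hnorm xt,
    hcov.monodromyHom_surjective hconnC hnorm xt, hcov.ker_monodromyHom hconnC hnorm xt⟩

/-- Let `F : G̃ → G` be a normal covering of connected groupoids.  Then for any
object `xt` of `G̃` over `x = F(xt)` there is a short exact sequence
`1 → G̃_{xt} → G_x → Deck(F) → 1` of vertex groups: the induced map `G̃_{xt} → G_x` is injective,
and there is a surjection `G_x → Deck(F)` whose kernel is exactly the image of `G̃_{xt}`. -/
theorem normal_covering_vertex_group_ses {C : Type u} {D : Type u}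
    [Groupoid.{v} C] [Groupoid.{v} D] (F : C ⥤ D)
    (hconnC : ∀ x y : C, Nonempty (x ⟶ y)) (hconnD : ∀ x y : D, Nonempty (x ⟶ y))
    (hcov : IsGroupoidCovering F) (hnorm : IsNormalCovering F) (xt : C) :
    Function.Injective (vertexHom F xt) ∧
    ∃ ψ : (F.obj xt ⟶ F.obj xt) →* Deck F,
      Function.Surjective ψ ∧ ψ.ker = (vertexHom F xt).range :=
  normal_covering_vertex_group_ses_general F hconnC hcov hnorm xt
end

section
/- Assume W is a finite Coxeter group and let π: A → W be the projection from the Artin–Tits group. Let W̃ ⊂ A⁺ denote the set of positive lifts of elements of W (images of the set-theoretic section w ↦ σ_w). Then π restricts to an isomorphism of posets between (W̃, left-divisibility in the monoid A⁺) and (W, weak left Bruhat order); in particular, for u,v ∈ W, σ_u left-divides σ_v in A⁺ if and only if u ≤ v in the weak left Bruhat order. -/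
variable {B : Type*}

/-- The braid word `σ_i σ_j σ_i ⋯` of length `M i j`. -/
def braidWord (M : CoxeterMatrix B) (i j : B) : FreeGroup B :=
  ((List.range (M i j)).map fun k => if k % 2 = 0 then FreeGroup.of i else FreeGroup.of j).prod

/-- The braid relations defining the Artin--Tits group of `M`. -/
def artinRelationsSet (M : CoxeterMatrix B) : Set (FreeGroup B) :=
  {r | ∃ i j : B, r = braidWord M i j * (braidWord M j i)⁻¹}

/-- The Artin--Tits group attached to the Coxeter matrix `M`. -/
def ArtinGroup (M : CoxeterMatrix B) : Type _ := PresentedGroup (artinRelationsSet M)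

instance (M : CoxeterMatrix B) : Group (ArtinGroup M) := by
  unfold ArtinGroup; infer_instance

/-- The Artin generator `σ_i`. -/
def artinGen (M : CoxeterMatrix B) (i : B) : ArtinGroup M := PresentedGroup.of i

/-- The positive Artin--Tits monoid `A⁺` (realised as the submonoid of `A` generated by the
Artin generators; for finite type this is isomorphic to the presented Artin monoid). -/
def artinPos (M : CoxeterMatrix B) : Submonoid (ArtinGroup M) :=
  Submonoid.closure (Set.range (artinGen M))

/-!
The braid relations are homogeneous, so `σ_i ↦ 1` defines a degree `A → ℤ`, and it sends `σ_w`
to `ℓ(w)`. If `σ_v = σ_u c` with `c` a positive word `ω`, projecting to `W` gives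
`u⁻¹v = π(ω)`, hence `ℓ(u⁻¹v) ≤ |ω| = ℓ(v) - ℓ(u)`, and subadditivity of `ℓ` forces equality.
Conversely, if `ℓ(u) + ℓ(u⁻¹v) = ℓ(v)`, reduced words for `u` and `u⁻¹v` concatenate to a
reduced word for `v`, so `σ_v = σ_u σ_{u⁻¹v}`.
-/

theorem lift_const_braidWord {G : Type*} [Group G] (M : CoxeterMatrix B) (x : G) (i j : B) :
    FreeGroup.lift (fun _ => x) (braidWord M i j) = x ^ M i j := by
  rw [braidWord, map_list_prod, List.prod_eq_pow_card _ x, List.length_map, List.length_map,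
    List.length_range]
  simp only [List.mem_map]
  rintro _ ⟨_, ⟨k, -, rfl⟩, rfl⟩
  split_ifs <;> exact FreeGroup.lift_apply_of

def artinDegree (M : CoxeterMatrix B) : ArtinGroup M →* Multiplicative ℤ :=
  PresentedGroup.toGroup (f := fun _ => Multiplicative.ofAdd 1) <| by
    rintro _ ⟨i, j, rfl⟩
    rw [map_mul, map_inv, lift_const_braidWord, lift_const_braidWord, M.symmetric, mul_inv_cancel]

theorem artinDegree_list_prod (M : CoxeterMatrix B) (ω : List B) :
    artinDegree M (ω.map (artinGen M)).prod = Multiplicative.ofAdd (ω.length : ℤ) := by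
  rw [map_list_prod, List.prod_eq_pow_card _ (Multiplicative.ofAdd 1), List.length_map,
    List.length_map, ← ofAdd_nsmul, nsmul_one]
  simp only [List.mem_map]
  rintro _ ⟨_, ⟨i, -, rfl⟩, rfl⟩
  exact PresentedGroup.toGroup.of _

theorem mem_artinPos_iff (M : CoxeterMatrix B) {c : ArtinGroup M} :
    c ∈ artinPos M ↔ ∃ ω : List B, (ω.map (artinGen M)).prod = c := by
  rw [artinPos, ← FreeMonoid.mrange_lift, MonoidHom.mem_mrange]
  simp only [FreeMonoid.lift_apply]
  exact ⟨fun ⟨ω, h⟩ => ⟨ω.toList, h⟩, fun ⟨ω, h⟩ => ⟨FreeMonoid.ofList ω, h⟩⟩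

section PositiveLift

variable {M : CoxeterMatrix B}

local prefix:100 "ℓ" => M.toCoxeterSystem.length

theorem map_list_prod_artinGen {π : ArtinGroup M →* M.Group}
    (hπ : ∀ i, π (artinGen M i) = M.simple i) (ω : List B) :
    π (ω.map (artinGen M)).prod = M.toCoxeterSystem.wordProd ω := by
  rw [map_list_prod, List.map_map, CoxeterSystem.wordProd]
  exact congrArg _ (List.map_congr_left fun i _ => hπ i)

def IsPositiveLift (σ : M.Group → ArtinGroup M) : Prop :=
  ∀ ω, M.toCoxeterSystem.IsReduced ω →
    σ (M.toCoxeterSystem.wordProd ω) = (ω.map (artinGen M)).prod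

namespace IsPositiveLift

variable {σ : M.Group → ArtinGroup M}

theorem exists_isReduced (hσ : IsPositiveLift σ) (w : M.Group) :
    ∃ ω, M.toCoxeterSystem.IsReduced ω ∧ M.toCoxeterSystem.wordProd ω = w ∧
      σ w = (ω.map (artinGen M)).prod := by
  obtain ⟨ω, hω, rfl⟩ := M.toCoxeterSystem.exists_isReduced w
  exact ⟨ω, hω, rfl, hσ ω hω⟩

theorem mem_artinPos (hσ : IsPositiveLift σ) (w : M.Group) : σ w ∈ artinPos M := by
  obtain ⟨ω, -, -, hw⟩ := hσ.exists_isReduced w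
  exact (mem_artinPos_iff M).2 ⟨ω, hw.symm⟩

theorem map_apply (hσ : IsPositiveLift σ) {π : ArtinGroup M →* M.Group}
    (hπ : ∀ i, π (artinGen M i) = M.simple i) (w : M.Group) : π (σ w) = w := by
  obtain ⟨ω, -, rfl, hw⟩ := hσ.exists_isReduced w
  rw [hw, map_list_prod_artinGen hπ]

theorem artinDegree_apply (hσ : IsPositiveLift σ) (w : M.Group) :
    artinDegree M (σ w) = Multiplicative.ofAdd (ℓ w : ℤ) := by
  obtain ⟨ω, hω, rfl, hw⟩ := hσ.exists_isReduced w
  rw [hw, artinDegree_list_prod, hω.eq]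

theorem length_add_length_inv_mul_of_eq_mul (hσ : IsPositiveLift σ)
    {π : ArtinGroup M →* M.Group} (hπ : ∀ i, π (artinGen M i) = M.simple i)
    {u v : M.Group} {c : ArtinGroup M} (hc : c ∈ artinPos M) (hvu : σ v = σ u * c) :
    ℓ u + ℓ (u⁻¹ * v) = ℓ v := by
  obtain ⟨ω, rfl⟩ := (mem_artinPos_iff M).1 hc
  have hquot : u⁻¹ * v = M.toCoxeterSystem.wordProd ω := by
    rw [← hσ.map_apply hπ v, hvu, map_mul, hσ.map_apply hπ, map_list_prod_artinGen hπ,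
      inv_mul_cancel_left]
  have hdeg : (ℓ v : ℤ) = ℓ u + ω.length := by
    have := congrArg (artinDegree M) hvu
    rwa [map_mul, hσ.artinDegree_apply, hσ.artinDegree_apply, artinDegree_list_prod,
      ← ofAdd_add, Multiplicative.ofAdd.injective.eq_iff] at this
  have hword : ℓ (u⁻¹ * v) ≤ ω.length := hquot ▸ M.toCoxeterSystem.length_wordProd_le ω
  have htri : ℓ v ≤ ℓ u + ℓ (u⁻¹ * v) := by
    simpa only [mul_inv_cancel_left] using M.toCoxeterSystem.length_mul_le u (u⁻¹ * v)
  omega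

theorem exists_eq_mul_of_length_add (hσ : IsPositiveLift σ) {u v : M.Group}
    (huv : ℓ u + ℓ (u⁻¹ * v) = ℓ v) : ∃ c ∈ artinPos M, σ v = σ u * c := by
  obtain ⟨ωu, hωu, hu, hσu⟩ := hσ.exists_isReduced u
  obtain ⟨ωc, hωc, hc, hσc⟩ := hσ.exists_isReduced (u⁻¹ * v)
  have hv : M.toCoxeterSystem.wordProd (ωu ++ ωc) = v := by
    rw [M.toCoxeterSystem.wordProd_append, hu, hc, mul_inv_cancel_left]
  have hred : M.toCoxeterSystem.IsReduced (ωu ++ ωc) := by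
    rw [CoxeterSystem.IsReduced, hv, List.length_append, ← hωu.eq, ← hωc.eq, hu, hc, huv]
  refine ⟨σ (u⁻¹ * v), hσ.mem_artinPos _, ?_⟩
  rw [hσu, hσc, ← List.prod_append, ← List.map_append, ← hσ _ hred, hv]

end IsPositiveLift

end PositiveLift

theorem positive_lift_poset_iso_general (M : CoxeterMatrix B)
    (π : ArtinGroup M →* M.Group) (hπ : ∀ i : B, π (artinGen M i) = M.simple i)
    (σ : M.Group → ArtinGroup M)
    (hσ : ∀ ω : List B, M.toCoxeterSystem.IsReduced ω →
      σ (M.toCoxeterSystem.wordProd ω) = (ω.map (artinGen M)).prod) :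
    (∀ w : M.Group, π (σ w) = w) ∧
    Function.Injective σ ∧
    (∀ w : M.Group, σ w ∈ artinPos M) ∧
    (∀ u v : M.Group,
      (∃ c ∈ artinPos M, σ v = σ u * c) ↔
      M.toCoxeterSystem.length u + M.toCoxeterSystem.length (u⁻¹ * v) =
        M.toCoxeterSystem.length v) := by
  have hσ : IsPositiveLift σ := hσ
  exact ⟨hσ.map_apply hπ, Function.LeftInverse.injective (hσ.map_apply hπ), hσ.mem_artinPos,
    fun _ _ => ⟨fun ⟨_, hc, hvu⟩ => hσ.length_add_length_inv_mul_of_eq_mul hπ hc hvu,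
      hσ.exists_eq_mul_of_length_add⟩⟩

/-- Assume `W` is finite.  Let `σ : W → A` be the positive-lift section
(characterised by `σ(wordProd ω) = σ_{i_1} ⋯ σ_{i_r}` for every reduced word `ω = (i_1,…,i_r)`),
whose range is the set `W̃ ⊂ A⁺` of positive lifts.  Then `π` restricts to a poset isomorphism
between `(W̃, left-divisibility in A⁺)` and `(W, weak left Bruhat order)`: `π ∘ σ = id`, `σ` is
injective, every `σ w` lies in `A⁺`, and for `u, v ∈ W`, `σ u` left-divides `σ v` in `A⁺` iff
`u ≤ v` in the weak left Bruhat order, i.e. `ℓ(u) + ℓ(u⁻¹ v) = ℓ(v)`. -/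
theorem positive_lift_poset_iso (M : CoxeterMatrix B) [Finite M.Group]
    (π : ArtinGroup M →* M.Group) (hπ : ∀ i : B, π (artinGen M i) = M.simple i)
    (σ : M.Group → ArtinGroup M)
    (hσ : ∀ ω : List B, M.toCoxeterSystem.IsReduced ω →
      σ (M.toCoxeterSystem.wordProd ω) = (ω.map (artinGen M)).prod) :
    (∀ w : M.Group, π (σ w) = w) ∧
    Function.Injective σ ∧
    (∀ w : M.Group, σ w ∈ artinPos M) ∧
    (∀ u v : M.Group,
      (∃ c ∈ artinPos M, σ v = σ u * c) ↔
      M.toCoxeterSystem.length u + M.toCoxeterSystem.length (u⁻¹ * v) =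
        M.toCoxeterSystem.length v) :=
  positive_lift_poset_iso_general M π hπ σ hσ
end

section
/- Let (C°, 𝓗) be a locally finite hyperplane arrangement in an open convex subset C° of a finite-dimensional real vector space. Then any two chambers (connected components of C° minus the union of hyperplanes) are connected by a finite sequence of wall crossings, i.e., there is a finite sequence of chambers starting and ending at the given ones in which consecutive chambers are adjacent (their closures share a codimension-one intersection with a common hyperplane). -/
/-!
Fix `x` in the first chamber. A point `y` of the second chamber can be chosen so that the segment
`[x, y]` meets no intersection `H ∩ H'` of two distinct hyperplanes: by local finiteness only
finitely many hyperplanes meet the segments from `x` to a small closed ball, and `y` only has to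
avoid the finitely many proper subspaces `(H ⊓ H') ⊔ ℝ x`. Every point of the segment then has a
neighbourhood whose regular points lie in a single chamber, or in the two chambers on either side
of the unique hyperplane through it, which are adjacent. The segment is connected and the regular
points are dense in `C`, so these local links chain together into a gallery.
-/

variable {V : Type*} [NormedAddCommGroup V] [NormedSpace ℝ V] [FiniteDimensional ℝ V]

/-- The chambers of the arrangement `(C°, 𝓗)`: connected components of
`C° \ ⋃_{H ∈ 𝓗} H`. -/
def IsChamberOf (C : Set V) (ℋ : Set (Submodule ℝ V)) (D : Set V) : Prop :=
  ∃ x ∈ C \ ⋃ H ∈ ℋ, (H : Set V),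
    D = connectedComponentIn (C \ ⋃ H ∈ ℋ, (H : Set V)) x

/-- Two chambers are adjacent if their closures share a codimension-one intersection lying on a
common hyperplane `H ∈ 𝓗`: the intersection of the closures contains a relatively open piece
of `H`. -/
def AdjacentChambers (C : Set V) (ℋ : Set (Submodule ℝ V)) (D D' : Set V) : Prop :=
  IsChamberOf C ℋ D ∧ IsChamberOf C ℋ D' ∧
  ∃ H ∈ ℋ, ∃ x ∈ (closure D ∩ closure D') ∩ (H : Set V),
    ∃ U ∈ nhds x, U ∩ (H : Set V) ⊆ closure D ∩ closure D'

open Set Topology Filter Submodule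

/-- The relation is propagated between neighbourhoods rather than points, since `r` need only be
meaningful on `S`; density of `S` near `s` glues consecutive neighbourhoods. -/
theorem IsPreconnected.rel_of_forall_nhds {X : Type*} [TopologicalSpace X] {s S : Set X}
    {r : X → X → Prop} (hs : IsPreconnected s) (hsS : s ⊆ closure S)
    (htrans : ∀ u v w, r u v → r v w → r u w)
    (hloc : ∀ p ∈ s, ∃ U ∈ 𝓝 p, ∀ u ∈ U ∩ S, ∀ v ∈ U ∩ S, r u v)
    {x y : X} (hxs : x ∈ s) (hxS : x ∈ S) (hys : y ∈ s) (hyS : y ∈ S) : r x y := by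
  let P z w := ∃ U ∈ 𝓝 z, ∃ W ∈ 𝓝 w, ∀ u ∈ U ∩ S, ∀ v ∈ W ∩ S, r u v
  have hP : P x y := by
    refine hs.induction₂' P (fun p hp => ?_) ?_ hxs hys
    · obtain ⟨U, hU, hUS⟩ := hloc p hp
      filter_upwards [mem_nhdsWithin_of_mem_nhds (interior_mem_nhds.2 hU)] with q hq
      have hUq : U ∈ 𝓝 q := mem_interior_iff_mem_nhds.1 hq
      exact ⟨⟨U, hU, U, hUq, hUS⟩, ⟨U, hUq, U, hU, hUS⟩⟩
    · rintro z w q - hw - ⟨U, hU, W, hW, hUW⟩ ⟨W', hW', Q, hQ, hWQ⟩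
      obtain ⟨v, ⟨hvW, hvW'⟩, hvS⟩ := mem_closure_iff_nhds.1 (hsS hw) _ (inter_mem hW hW')
      exact ⟨U, hU, Q, hQ, fun u hu q' hq' =>
        htrans _ _ _ (hUW u hu v ⟨hvW, hvS⟩) (hWQ v ⟨hvW', hvS⟩ q' hq')⟩
  obtain ⟨U, hU, W, hW, h⟩ := hP
  exact h x ⟨mem_of_mem_nhds hU, hxS⟩ y ⟨mem_of_mem_nhds hW, hyS⟩

theorem mem_closure_inter_setOf_neg {E : Type*} [AddCommGroup E] [Module ℝ E]
    [TopologicalSpace E] [ContinuousAdd E] [ContinuousSMul ℝ E] {O : Set E} (hO : IsOpen O)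
    {f : E →ₗ[ℝ] ℝ} (hf : f ≠ 0) {w : E} (hw : w ∈ O) (hfw : f w = 0) :
    w ∈ closure (O ∩ {z | f z < 0}) := by
  obtain ⟨v, hv⟩ : ∃ v, f v = -1 := by
    obtain ⟨v₀, hv₀⟩ : ∃ v₀, f v₀ ≠ 0 := by
      by_contra! h
      exact hf (LinearMap.ext h)
    exact ⟨-(f v₀)⁻¹ • v₀, by simp [hv₀]⟩
  have hlim : Tendsto (fun s : ℝ => w + s • v) (𝓝[>] 0) (𝓝 w) := by
    have hcont : Continuous fun s : ℝ => w + s • v := by fun_prop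
    simpa using (hcont.tendsto 0).mono_left nhdsWithin_le_nhds
  refine mem_closure_of_tendsto hlim ?_
  filter_upwards [hlim (hO.mem_nhds hw), self_mem_nhdsWithin] with s hsO hs
  refine ⟨hsO, ?_⟩
  simp only [mem_ofPred_eq, map_add, map_smul, hfw, hv, smul_eq_mul]
  linarith [mem_Ioi.1 hs]

theorem mem_sup_span_singleton_of_mem_segment {E : Type*} [AddCommGroup E] [Module ℝ E]
    {W : Submodule ℝ E} {x y z : E} (hx : x ∉ W) (hz : z ∈ segment ℝ x y) (hzW : z ∈ W) :
    y ∈ W ⊔ span ℝ {x} := by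
  obtain ⟨a, b, -, -, hab, rfl⟩ := hz
  have hb : b ≠ 0 := by
    rintro rfl
    rw [add_zero] at hab
    exact hx (by simpa [hab] using hzW)
  have hy : y = b⁻¹ • (a • x + b • y) + (-(b⁻¹ * a)) • x := by
    rw [smul_add, smul_smul, smul_smul, inv_mul_cancel₀ hb, one_smul, neg_smul, mul_smul]
    abel
  rw [hy]
  exact add_mem (smul_mem _ _ (mem_sup_left hzW))
    (smul_mem _ _ (mem_sup_right (mem_span_singleton_self x)))

theorem ker_inf_ker_sup_span_singleton_ne_top {E : Type*} [AddCommGroup E] [Module ℝ E]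
    {f f' : E →ₗ[ℝ] ℝ} {x : E} (hfx : f x ≠ 0) (hf'x : f' x ≠ 0)
    (hne : LinearMap.ker f ≠ LinearMap.ker f') :
    LinearMap.ker f ⊓ LinearMap.ker f' ⊔ span ℝ {x} ≠ ⊤ := by
  intro htop
  set h := f' x • f - f x • f'
  have hle : LinearMap.ker f ⊓ LinearMap.ker f' ⊔ span ℝ {x} ≤ LinearMap.ker h := by
    refine sup_le (fun z hz => ?_) ((span_singleton_le_iff_mem _ _).2 ?_)
    · simp [h, LinearMap.mem_ker.1 hz.1, LinearMap.mem_ker.1 hz.2]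
    · simp [h, mul_comm]
  have h0 : h = 0 := LinearMap.ker_eq_top.1 (top_le_iff.1 (htop ▸ hle))
  have hff' : f = (f x / f' x) • f' := by
    rw [div_eq_inv_mul, mul_smul, ← sub_eq_zero.1 h0, smul_smul, inv_mul_cancel₀ hf'x, one_smul]
  exact hne (by rw [hff', LinearMap.ker_smul _ _ (div_ne_zero hfx hf'x)])

theorem exists_mem_forall_notMem_of_finite {s : Set (Submodule ℝ V)} (hs : s.Finite)
    (hproper : ∀ q ∈ s, q ≠ ⊤) {O : Set V} (hO : IsOpen O) (hOne : O.Nonempty) :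
    ∃ v ∈ O, ∀ q ∈ s, v ∉ q := by
  have hdense : Dense (⋂ q ∈ s, (q : Set V)ᶜ) := by
    refine dense_biInter_of_isOpen (fun q _ => q.closed_of_finiteDimensional.isOpen_compl)
      hs.countable (fun q hq => interior_eq_empty_iff_dense_compl.1 ?_)
    by_contra h
    exact hproper q hq (q.eq_top_of_nonempty_interior' (nonempty_iff_ne_empty.2 h))
  obtain ⟨v, hv, hvO⟩ := hdense.exists_mem_open hO hOne
  exact ⟨v, hvO, fun q hq => mem_iInter₂.1 hv q hq⟩

section Arrangement

variable {E : Type*} [NormedAddCommGroup E] [NormedSpace ℝ E] {C : Set E}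
  {ℋ : Set (Submodule ℝ E)}

abbrev regularPoints (C : Set E) (ℋ : Set (Submodule ℝ E)) : Set E :=
  C \ ⋃ H ∈ ℋ, (H : Set E)

def IsLocallyFiniteIn (ℋ : Set (Submodule ℝ E)) (C : Set E) : Prop :=
  ∀ x ∈ C, ∃ U ∈ 𝓝 x, {H ∈ ℋ | ((H : Set E) ∩ U).Nonempty}.Finite

theorem IsLocallyFiniteIn.finite_setOf_inter_nonempty (hlocfin : IsLocallyFiniteIn ℋ C)
    {K : Set E} (hK : IsCompact K) (hKC : K ⊆ C) :
    {H ∈ ℋ | ((H : Set E) ∩ K).Nonempty}.Finite := by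
  choose! U hU hUfin using hlocfin
  obtain ⟨t, hcover⟩ := hK.elim_nhds_subcover' (fun z _ => U z) (fun z hz => hU z (hKC hz))
  refine (t.finite_toSet.biUnion fun z _ => hUfin z (hKC z.2)).subset ?_
  rintro H ⟨hH, w, hwH, hwK⟩
  obtain ⟨z, hzt, hwz⟩ := mem_iUnion₂.1 (hcover hwK)
  exact mem_iUnion₂.2 ⟨z, hzt, hH, w, hwH, hwz⟩

theorem AdjacentChambers.symm {D D' : Set E} (h : AdjacentChambers C ℋ D D') :
    AdjacentChambers C ℋ D' D := by
  obtain ⟨hD, hD', H, hH, x, ⟨⟨hxD, hxD'⟩, hxH⟩, U, hU, hUH⟩ := h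
  exact ⟨hD', hD, H, hH, x, ⟨⟨hxD', hxD⟩, hxH⟩, U, hU, fun w hw => (hUH hw).symm⟩

theorem exists_chain_of_reflTransGen_adjacentChambers {D D' : Set E} (hD : IsChamberOf C ℋ D)
    (h : Relation.ReflTransGen (AdjacentChambers C ℋ) D D') :
    ∃ L : List (Set E), L.IsChain (AdjacentChambers C ℋ) ∧
      (∀ E ∈ L, IsChamberOf C ℋ E) ∧ L.head? = some D ∧ L.getLast? = some D' := by
  obtain ⟨l, hchain, hlast⟩ := List.exists_isChain_cons_of_relationReflTransGen h
  refine ⟨D :: l, hchain, hchain.induction _ _ (fun _ _ hadj _ => hadj.2.1) (fun _ => hD), rfl, ?_⟩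
  rw [List.getLast?_eq_some_getLast (List.cons_ne_nil _ _), hlast]

theorem inter_setOf_ne_zero_subset_regularPoints {B : Set E} (hBC : B ⊆ C) {f : E →ₗ[ℝ] ℝ}
    (honly : ∀ H ∈ ℋ, ((H : Set E) ∩ B).Nonempty → H = LinearMap.ker f) :
    B ∩ {z | f z ≠ 0} ⊆ regularPoints C ℋ := by
  rintro z ⟨hzB, hfz⟩
  refine ⟨hBC hzB, fun hz => ?_⟩
  obtain ⟨H, hH, hzH⟩ := mem_iUnion₂.1 hz
  exact hfz (LinearMap.mem_ker.1 (honly H hH ⟨z, hzH, hzB⟩ ▸ hzH))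

theorem adjacentChambers_of_opposite_sides {B : Set E} (hB : IsOpen B) (hBconv : Convex ℝ B)
    (hBC : B ⊆ C) {f : E →ₗ[ℝ] ℝ} (hf : f ≠ 0) (hwall : LinearMap.ker f ∈ ℋ)
    (honly : ∀ H ∈ ℋ, ((H : Set E) ∩ B).Nonempty → H = LinearMap.ker f)
    {p u v : E} (hp : p ∈ B) (hfp : f p = 0) (hu : u ∈ B) (hfu : f u < 0) (hv : v ∈ B)
    (hfv : 0 < f v) :
    AdjacentChambers C ℋ (connectedComponentIn (regularPoints C ℋ) u)
      (connectedComponentIn (regularPoints C ℋ) v) := by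
  set P := B ∩ {z | f z < 0}
  set Q := B ∩ {z | (-f) z < 0}
  have hPQ : ∀ w ∈ B ∩ LinearMap.ker f, w ∈ closure P ∩ closure Q := fun w ⟨hw, hfw⟩ =>
    ⟨mem_closure_inter_setOf_neg hB hf hw hfw,
      mem_closure_inter_setOf_neg hB (neg_ne_zero.2 hf) hw (by simpa using hfw)⟩
  have hsides := inter_setOf_ne_zero_subset_regularPoints hBC honly
  have hPu : P ⊆ connectedComponentIn (regularPoints C ℋ) u :=
    (hBconv.inter (convex_halfSpace_lt f.isLinear 0)).isPreconnected.subset_connectedComponentIn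
      ⟨hu, hfu⟩ fun z hz => hsides ⟨hz.1, hz.2.ne⟩
  have hQv : Q ⊆ connectedComponentIn (regularPoints C ℋ) v :=
    (hBconv.inter (convex_halfSpace_lt (-f).isLinear 0)).isPreconnected.subset_connectedComponentIn
      ⟨hv, by simpa using hfv⟩
      fun z hz => hsides ⟨hz.1, by simpa using (show (-f) z < 0 from hz.2).ne⟩
  have hcl : B ∩ LinearMap.ker f ⊆ closure (connectedComponentIn (regularPoints C ℋ) u) ∩
      closure (connectedComponentIn (regularPoints C ℋ) v) := fun w hw =>
    ⟨closure_mono hPu (hPQ w hw).1, closure_mono hQv (hPQ w hw).2⟩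
  exact ⟨⟨u, hsides ⟨hu, hfu.ne⟩, rfl⟩, ⟨v, hsides ⟨hv, hfv.ne'⟩, rfl⟩, _, hwall, p,
    ⟨hcl ⟨hp, hfp⟩, hfp⟩, B, hB.mem_nhds hp, hcl⟩

theorem reflTransGen_adjacentChambers_of_isPreconnected {W : Set E} (hW : IsPreconnected W)
    (hWS : W ⊆ regularPoints C ℋ) {u v : E} (hu : u ∈ W) (hv : v ∈ W) :
    Relation.ReflTransGen (AdjacentChambers C ℋ) (connectedComponentIn (regularPoints C ℋ) u)
      (connectedComponentIn (regularPoints C ℋ) v) := by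
  rw [connectedComponentIn_eq (hW.subset_connectedComponentIn hu hWS hv)]

theorem reflTransGen_adjacentChambers_of_wall {B : Set E} (hB : IsOpen B) (hBconv : Convex ℝ B)
    (hBC : B ⊆ C) {f : E →ₗ[ℝ] ℝ} (hf : f ≠ 0) (hwall : LinearMap.ker f ∈ ℋ)
    (honly : ∀ H ∈ ℋ, ((H : Set E) ∩ B).Nonempty → H = LinearMap.ker f)
    {p : E} (hp : p ∈ B) (hfp : f p = 0) {u v : E} (hu : u ∈ B ∩ regularPoints C ℋ)
    (hv : v ∈ B ∩ regularPoints C ℋ) :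
    Relation.ReflTransGen (AdjacentChambers C ℋ) (connectedComponentIn (regularPoints C ℋ) u)
      (connectedComponentIn (regularPoints C ℋ) v) := by
  have hoff : ∀ z ∈ regularPoints C ℋ, f z ≠ 0 := fun z hz hfz => hz.2 (mem_biUnion hwall hfz)
  have hsides := inter_setOf_ne_zero_subset_regularPoints hBC honly
  have hneg := hBconv.inter (convex_halfSpace_lt f.isLinear 0)
  have hpos := hBconv.inter (convex_halfSpace_gt f.isLinear 0)
  rcases (hoff u hu.2).lt_or_gt with hfu | hfu <;> rcases (hoff v hv.2).lt_or_gt with hfv | hfv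
  · exact reflTransGen_adjacentChambers_of_isPreconnected hneg.isPreconnected
      (fun z hz => hsides ⟨hz.1, hz.2.ne⟩) ⟨hu.1, hfu⟩ ⟨hv.1, hfv⟩
  · exact .single <| adjacentChambers_of_opposite_sides hB hBconv hBC hf hwall honly hp hfp
      hu.1 hfu hv.1 hfv
  · exact .single <| (adjacentChambers_of_opposite_sides hB hBconv hBC hf hwall honly hp hfp
      hv.1 hfv hu.1 hfu).symm
  · exact reflTransGen_adjacentChambers_of_isPreconnected hpos.isPreconnected
      (fun z hz => hsides ⟨hz.1, hz.2.ne'⟩) ⟨hu.1, hfu⟩ ⟨hv.1, hfv⟩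

end Arrangement

section FiniteDimensional

variable {C : Set V} {ℋ : Set (Submodule ℝ V)}

theorem IsLocallyFiniteIn.exists_ball (hlocfin : IsLocallyFiniteIn ℋ C) (hC : IsOpen C)
    {p : V} (hp : p ∈ C) :
    ∃ r > 0, Metric.ball p r ⊆ C ∧ {H ∈ ℋ | ((H : Set V) ∩ Metric.ball p r).Nonempty}.Finite ∧
      ∀ H ∈ ℋ, ((H : Set V) ∩ Metric.ball p r).Nonempty → p ∈ H := by
  obtain ⟨U, hU, hfin⟩ := hlocfin p hp
  set far := ⋃ H ∈ {H ∈ ℋ | ((H : Set V) ∩ U).Nonempty ∧ p ∉ H}, (H : Set V)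
  have hfar : IsClosed far :=
    (hfin.subset fun H hH => ⟨hH.1, hH.2.1⟩).isClosed_biUnion
      fun H _ => H.closed_of_finiteDimensional
  have hpfar : p ∉ far := fun h => by
    obtain ⟨H, hH, hpH⟩ := mem_iUnion₂.1 h
    exact hH.2.2 hpH
  obtain ⟨r, hr, hball⟩ := Metric.isOpen_iff.1 ((hC.inter isOpen_interior).sdiff hfar) p
    ⟨⟨hp, mem_interior_iff_mem_nhds.2 hU⟩, hpfar⟩
  have hballU : Metric.ball p r ⊆ U := fun w hw => interior_subset (hball hw).1.2
  refine ⟨r, hr, fun w hw => (hball hw).1.1,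
    hfin.subset fun H ⟨hH, hHball⟩ => ⟨hH, hHball.mono (inter_subset_inter_right _ hballU)⟩,
    fun H hH ⟨w, hwH, hw⟩ => ?_⟩
  by_contra hpH
  exact (hball hw).2 (mem_iUnion₂.2 ⟨H, ⟨hH, ⟨w, hwH, hballU hw⟩, hpH⟩, hwH⟩)

theorem ball_subset_regularPoints (hlocfin : IsLocallyFiniteIn ℋ C) (hC : IsOpen C) {p : V}
    (hp : p ∈ regularPoints C ℋ) : ∃ r > 0, Metric.ball p r ⊆ regularPoints C ℋ := by
  obtain ⟨r, hr, hballC, -, hthrough⟩ := hlocfin.exists_ball hC hp.1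
  refine ⟨r, hr, fun w hw => ⟨hballC hw, fun hwH => ?_⟩⟩
  obtain ⟨H, hH, hwH⟩ := mem_iUnion₂.1 hwH
  exact hp.2 (mem_biUnion hH (hthrough H hH ⟨w, hwH, hw⟩))

theorem isOpen_regularPoints (hlocfin : IsLocallyFiniteIn ℋ C) (hC : IsOpen C) :
    IsOpen (regularPoints C ℋ) :=
  Metric.isOpen_iff.2 fun _ hp => ball_subset_regularPoints hlocfin hC hp

theorem subset_closure_regularPoints (hlocfin : IsLocallyFiniteIn ℋ C) (hC : IsOpen C)
    (hproper : ∀ H ∈ ℋ, H ≠ ⊤) : C ⊆ closure (regularPoints C ℋ) := by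
  intro p hp
  obtain ⟨r, hr, hballC, hfin, -⟩ := hlocfin.exists_ball hC hp
  refine mem_closure_iff_nhds.2 fun N hN => ?_
  obtain ⟨v, ⟨hvN, hvball⟩, hvH⟩ := exists_mem_forall_notMem_of_finite hfin
    (fun H hH => hproper H hH.1) (isOpen_interior.inter Metric.isOpen_ball)
    ⟨p, mem_interior_iff_mem_nhds.2 hN, Metric.mem_ball_self hr⟩
  refine ⟨v, interior_subset hvN, hballC hvball, fun hv => ?_⟩
  obtain ⟨H, hH, hvH'⟩ := mem_iUnion₂.1 hv
  exact hvH H ⟨hH, v, hvH', hvball⟩ hvH'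

theorem exists_nhds_reflTransGen_adjacentChambers (hlocfin : IsLocallyFiniteIn ℋ C)
    (hC : IsOpen C) (hhyp : ∀ H ∈ ℋ, ∃ f : V →ₗ[ℝ] ℝ, f ≠ 0 ∧ H = LinearMap.ker f) {p : V}
    (hp : p ∈ C) (hsingle : {H ∈ ℋ | p ∈ H}.Subsingleton) :
    ∃ U ∈ 𝓝 p, ∀ u ∈ U ∩ regularPoints C ℋ, ∀ v ∈ U ∩ regularPoints C ℋ,
      Relation.ReflTransGen (AdjacentChambers C ℋ) (connectedComponentIn (regularPoints C ℋ) u)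
        (connectedComponentIn (regularPoints C ℋ) v) := by
  by_cases hpS : p ∈ regularPoints C ℋ
  · obtain ⟨r, hr, hball⟩ := ball_subset_regularPoints hlocfin hC hpS
    exact ⟨_, Metric.ball_mem_nhds p hr, fun u hu v hv =>
      reflTransGen_adjacentChambers_of_isPreconnected (convex_ball p r).isPreconnected hball
        hu.1 hv.1⟩
  obtain ⟨H₀, hH₀, hpH₀⟩ : ∃ H₀ ∈ ℋ, p ∈ H₀ := by simpa [hp] using hpS
  obtain ⟨f, hf, rfl⟩ := hhyp H₀ hH₀
  obtain ⟨r, hr, hballC, -, hthrough⟩ := hlocfin.exists_ball hC hp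
  exact ⟨_, Metric.ball_mem_nhds p hr, fun u hu v hv =>
    reflTransGen_adjacentChambers_of_wall Metric.isOpen_ball (convex_ball p r) hballC hf hH₀
      (fun H hH hHball => hsingle ⟨hH, hthrough H hH hHball⟩ ⟨hH₀, hpH₀⟩)
      (Metric.mem_ball_self hr) hpH₀ hu hv⟩

theorem exists_mem_forall_segment_subsingleton (hlocfin : IsLocallyFiniteIn ℋ C)
    (hC : Convex ℝ C) (hhyp : ∀ H ∈ ℋ, ∃ f : V →ₗ[ℝ] ℝ, f ≠ 0 ∧ H = LinearMap.ker f) {x : V}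
    (hx : x ∈ regularPoints C ℋ) {O : Set V} (hO : IsOpen O) (hOC : O ⊆ C) (hOne : O.Nonempty) :
    ∃ y ∈ O, ∀ z ∈ segment ℝ x y, {H ∈ ℋ | z ∈ H}.Subsingleton := by
  obtain ⟨y₀, hy₀⟩ := hOne
  obtain ⟨ρ, hρ, hρO⟩ := Metric.nhds_basis_closedBall.mem_iff.1 (hO.mem_nhds hy₀)
  set K := (fun q : ℝ × V => AffineMap.lineMap x q.2 q.1) '' (Icc 0 1 ×ˢ Metric.closedBall y₀ ρ)
  have hsegK : ∀ y ∈ Metric.closedBall y₀ ρ, segment ℝ x y ⊆ K := by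
    intro y hy z hz
    rw [segment_eq_image_lineMap] at hz
    obtain ⟨t, ht, rfl⟩ := hz
    exact ⟨(t, y), ⟨ht, hy⟩, rfl⟩
  have hK : IsCompact K :=
    (isCompact_Icc.prod (isCompact_closedBall _ _)).image (by fun_prop)
  have hKC : K ⊆ C := by
    rintro _ ⟨⟨t, y⟩, ⟨ht, hy⟩, rfl⟩
    exact hC.segment_subset hx.1 (hOC (hρO hy))
      (segment_eq_image_lineMap ℝ x y ▸ mem_image_of_mem _ ht)
  set F := {H ∈ ℋ | ((H : Set V) ∩ K).Nonempty}
  have hF : F.Finite := hlocfin.finite_setOf_inter_nonempty hK hKC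
  have hx' : ∀ H ∈ ℋ, x ∉ H := fun H hH hxH => hx.2 (mem_biUnion hH hxH)
  set bad := {W | ∃ H ∈ F, ∃ H' ∈ F, H ≠ H' ∧ W = H ⊓ H' ⊔ span ℝ {x}}
  have hbad : bad.Finite := (hF.image2 (fun H H' => H ⊓ H' ⊔ span ℝ {x}) hF).subset
    fun W ⟨H, hH, H', hH', _, hW⟩ => hW ▸ mem_image2_of_mem hH hH'
  have hproper : ∀ W ∈ bad, W ≠ ⊤ := by
    rintro _ ⟨H, hH, H', hH', hne, rfl⟩
    obtain ⟨f, -, rfl⟩ := hhyp H hH.1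
    obtain ⟨f', -, rfl⟩ := hhyp H' hH'.1
    exact ker_inf_ker_sup_span_singleton_ne_top (hx' _ hH.1) (hx' _ hH'.1) hne
  obtain ⟨y, hy, hybad⟩ := exists_mem_forall_notMem_of_finite hbad hproper Metric.isOpen_ball
    ⟨y₀, Metric.mem_ball_self hρ⟩
  refine ⟨y, hρO (Metric.ball_subset_closedBall hy), fun z hz H hH H' hH' => ?_⟩
  by_contra hne
  have hzK := hsegK y (Metric.ball_subset_closedBall hy) hz
  exact hybad _ ⟨H, ⟨hH.1, z, hH.2, hzK⟩, H', ⟨hH'.1, z, hH'.2, hzK⟩, hne, rfl⟩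
    (mem_sup_span_singleton_of_mem_segment (fun hxW => hx' H hH.1 hxW.1) hz ⟨hH.2, hH'.2⟩)

end FiniteDimensional

theorem chambers_connected_by_wall_crossings_general
    (C : Set V) (hCopen : IsOpen C) (hCconv : Convex ℝ C)
    (ℋ : Set (Submodule ℝ V))
    (hhyp : ∀ H ∈ ℋ, ∃ f : V →ₗ[ℝ] ℝ, f ≠ 0 ∧ H = LinearMap.ker f)
    (hlocfin : ∀ x ∈ C, ∃ U ∈ nhds x, {H ∈ ℋ | ((H : Set V) ∩ U).Nonempty}.Finite)
    (D D' : Set V) (hD : IsChamberOf C ℋ D) (hD' : IsChamberOf C ℋ D') :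
    ∃ L : List (Set V), L.Chain' (AdjacentChambers C ℋ) ∧
      (∀ E ∈ L, IsChamberOf C ℋ E) ∧ L.head? = some D ∧ L.getLast? = some D' := by
  obtain ⟨x, hx, rfl⟩ := hD
  obtain ⟨y₀, hy₀, rfl⟩ := hD'
  have hproper : ∀ H ∈ ℋ, H ≠ ⊤ := fun H hH => by
    obtain ⟨f, hf, rfl⟩ := hhyp H hH
    exact mt LinearMap.ker_eq_top.1 hf
  obtain ⟨y, hy, hgeneric⟩ := exists_mem_forall_segment_subsingleton hlocfin hCconv hhyp hx
    (isOpen_regularPoints hlocfin hCopen).connectedComponentIn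
    ((connectedComponentIn_subset _ _).trans sdiff_subset) ⟨y₀, mem_connectedComponentIn hy₀⟩
  have hyS : y ∈ regularPoints C ℋ := connectedComponentIn_subset _ _ hy
  have hseg : segment ℝ x y ⊆ C := hCconv.segment_subset hx.1 hyS.1
  rw [connectedComponentIn_eq hy]
  exact exists_chain_of_reflTransGen_adjacentChambers ⟨x, hx, rfl⟩
    ((convex_segment x y).isPreconnected.rel_of_forall_nhds
      (hseg.trans (subset_closure_regularPoints hlocfin hCopen hproper)) (fun _ _ _ => .trans)
      (fun p hp => exists_nhds_reflTransGen_adjacentChambers hlocfin hCopen hhyp (hseg hp)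
        (hgeneric p hp))
      (left_mem_segment ℝ x y) hx (right_mem_segment ℝ x y) hyS)

/-- Let `(C°, 𝓗)` be a locally finite arrangement of (linear) hyperplanes in an
open convex subset `C°` of a finite-dimensional real vector space, each hyperplane meeting `C°`.
Then any two chambers are connected by a finite sequence of wall crossings: there is a finite list
of chambers from the first to the second in which consecutive chambers are adjacent. -/
theorem chambers_connected_by_wall_crossings
    (C : Set V) (hCopen : IsOpen C) (hCconv : Convex ℝ C)
    (ℋ : Set (Submodule ℝ V))
    (hhyp : ∀ H ∈ ℋ, ∃ f : V →ₗ[ℝ] ℝ, f ≠ 0 ∧ H = LinearMap.ker f)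
    (hmeets : ∀ H ∈ ℋ, ((H : Set V) ∩ C).Nonempty)
    (hlocfin : ∀ x ∈ C, ∃ U ∈ nhds x, {H ∈ ℋ | ((H : Set V) ∩ U).Nonempty}.Finite)
    (D D' : Set V) (hD : IsChamberOf C ℋ D) (hD' : IsChamberOf C ℋ D') :
    ∃ L : List (Set V), L.Chain' (AdjacentChambers C ℋ) ∧
      (∀ E ∈ L, IsChamberOf C ℋ E) ∧ L.head? = some D ∧ L.getLast? = some D' :=
  chambers_connected_by_wall_crossings_general C hCopen hCconv ℋ hhyp hlocfin D D' hD hD'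
end
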